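/- arXiv:1406.6634 — 7 statements merged into one kernel-verified Lean document; each statement's English description precedes it below -/
import Mathlib

section
/- Let f_1, ..., f_s be homogeneous elements of degree d in S = K[x_1,...,x_n] minimally generating the ideal (f_1,...,f_s). If for every i ≤ s the ideal (f_1,...,f_i) is 1-step linear (its minimal free resolution is linear at the first syzygy step, i.e., Tor_1^S((f_1,...,f_i), K)_j = 0 for j ≠ d+1), then [f_1,...,f_s] is a linear quotient ordering, i.e., for each 1 < i ≤ s the colon ideal (f_1,...,f_{i-1}) : (f_i) is generated in degree 1. -/
open MvPolynomial

/-- The presentation map `S^s → S`, `g ↦ ∑ j, g j * f j`. -/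
noncomputable def combMap {S : Type*} [CommRing S] {s : ℕ} (f : Fin s → S) :
    (Fin s → S) →ₗ[S] S where
  toFun g := ∑ j, g j * f j
  map_add' a b := by simp [add_mul, Finset.sum_add_distrib]
  map_smul' c a := by simp [Finset.mul_sum, mul_assoc]

/-- The submodule of `S^s` of vectors supported on coordinates `< i`. -/
def suppLT (S : Type*) [CommRing S] (s i : ℕ) : Submodule S (Fin s → S) where
  carrier := {g | ∀ j : Fin s, i ≤ (j : ℕ) → g j = 0}
  add_mem' := by
    intro a b ha hb j hj
    simp [ha j hj, hb j hj]
  zero_mem' := by intro j hj; rfl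
  smul_mem' := by
    intro c a ha j hj
    simp [ha j hj]

/-- An ideal is generated by homogeneous elements of degree 1 (linear forms). -/
def DegOneGen {K : Type*} [CommRing K] {n : ℕ}
    (J : Ideal (MvPolynomial (Fin n) K)) : Prop :=
  ∃ T : Set (MvPolynomial (Fin n) K),
    (∀ g ∈ T, g.IsHomogeneous 1) ∧ J = Ideal.span T

/-!
The colon ideal `(f 0, …, f (i-1)) : (f i)` is exactly the set of `i`-th coordinates of the
syzygies of `f 0, …, f i`, i.e. the image of the syzygy module `ker (combMap f) ⊓ suppLT S s (i+1)`
under the `i`-th projection. Projecting a generating set of syzygies with linear entries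
therefore yields linear generators of the colon ideal.
-/

section Syzygies

variable {S : Type*} [CommRing S] {s : ℕ} (f : Fin s → S)

lemma combMap_single (j : Fin s) (p : S) : combMap f (Pi.single j p) = p * f j := by
  simp only [combMap, LinearMap.coe_mk, AddHom.coe_mk]
  rw [Finset.sum_eq_single j (fun k _ hk => by simp [hk]) (by simp)]
  simp

lemma combMap_mem_span_of_mem_suppLT {i : ℕ} {g : Fin s → S} (hg : g ∈ suppLT S s i) :
    combMap f g ∈ Ideal.span (f '' {j | (j : ℕ) < i}) := by
  change ∑ j, g j * f j ∈ _
  refine Ideal.sum_mem _ fun j _ => ?_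
  rcases lt_or_ge (j : ℕ) i with hj | hj
  · exact Ideal.mul_mem_left _ _ (Ideal.subset_span ⟨j, hj, rfl⟩)
  · simp [hg j hj]

lemma map_combMap_suppLT (i : ℕ) :
    (suppLT S s i).map (combMap f) = Ideal.span (f '' {j | (j : ℕ) < i}) := by
  refine le_antisymm (Submodule.map_le_iff_le_comap.mpr fun g hg =>
    combMap_mem_span_of_mem_suppLT f hg) ?_
  rw [Ideal.span_le]
  rintro _ ⟨j, hj : (j : ℕ) < i, rfl⟩
  refine ⟨Pi.single j 1, fun k hk => ?_, by rw [combMap_single, one_mul]⟩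
  have hkj : k ≠ j := by rintro rfl; omega
  simp [hkj]

lemma colon_span_singleton_eq_map_proj (i : Fin s) :
    (Ideal.span (f '' {j | (j : ℕ) < i})).colon (Ideal.span {f i}) =
      (LinearMap.ker (combMap f) ⊓ suppLT S s (i + 1)).map (LinearMap.proj i) := by
  ext p
  rw [Ideal.mem_colon_span_singleton]
  constructor
  · intro hp
    rw [← map_combMap_suppLT] at hp
    obtain ⟨g, hg, hgp⟩ := hp
    refine ⟨Pi.single i p - g, ⟨?_, fun j hj => ?_⟩, by simp [hg i le_rfl]⟩
    · change combMap f (Pi.single i p - g) = 0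
      rw [map_sub, combMap_single, hgp, sub_self]
    · have hji : j ≠ i := by rintro rfl; omega
      simp [hji, hg j (by omega)]
  · rintro ⟨v, ⟨hker, hv⟩, rfl⟩
    have hlower : v - Pi.single i (v i) ∈ suppLT S s i := fun j hj => by
      rcases eq_or_ne j i with rfl | hji
      · simp
      · simp [hji, hv j (by omega)]
    have hmem := combMap_mem_span_of_mem_suppLT f hlower
    rwa [map_sub, LinearMap.mem_ker.mp hker, combMap_single, zero_sub, neg_mem_iff] at hmem

end Syzygies

lemma degOneGen_map_proj {K : Type*} [CommRing K] {n s : ℕ}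
    {M : Submodule (MvPolynomial (Fin n) K) (Fin s → MvPolynomial (Fin n) K)}
    (hM : M = Submodule.span _ {g | g ∈ M ∧ ∀ j, (g j).IsHomogeneous 1}) (i : Fin s) :
    DegOneGen (M.map (LinearMap.proj i)) := by
  refine ⟨(fun g => g i) '' {g | g ∈ M ∧ ∀ j, (g j).IsHomogeneous 1}, ?_, ?_⟩
  · rintro _ ⟨g, hg, rfl⟩
    exact hg.2 i
  · conv_lhs => rw [hM]
    rw [Submodule.map_span]
    rfl

theorem one_step_linear_implies_linear_quotients_general {K : Type*} [Field K] {n s : ℕ}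
    (f : Fin s → MvPolynomial (Fin n) K)
    (h1lin : ∀ i ≤ s,
      LinearMap.ker (combMap f) ⊓ suppLT (MvPolynomial (Fin n) K) s i =
        Submodule.span (MvPolynomial (Fin n) K)
          {g | g ∈ LinearMap.ker (combMap f) ⊓ suppLT (MvPolynomial (Fin n) K) s i ∧
            ∀ j, (g j).IsHomogeneous 1}) :
    ∀ i : Fin s, 0 < (i : ℕ) →
      DegOneGen ((Ideal.span (f '' {j | (j : ℕ) < (i : ℕ)})).colon (Ideal.span {f i})) := by
  intro i _
  rw [colon_span_singleton_eq_map_proj]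
  exact degOneGen_map_proj (h1lin _ i.isLt) i

/-- Let `f 0, …, f (s-1)` be homogeneous elements of degree `d` of `K[x_1,…,x_n]`
minimally generating the ideal they span.  If for every `i ≤ s` the ideal generated by
the first `i` of them is 1-step linear, i.e. the kernel of the presentation
`S(-d)^i → (f 0, …, f (i-1))` is generated in degree 1 (by vectors with linear entries),
then `[f 0, …, f (s-1)]` is a linear quotient ordering: each colon ideal
`(f 0, …, f (i-1)) : (f i)` is generated in degree 1. -/
theorem one_step_linear_implies_linear_quotients {K : Type*} [Field K] {n s : ℕ} (d : ℕ)
    (f : Fin s → MvPolynomial (Fin n) K)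
    (hhom : ∀ i, (f i).IsHomogeneous d)
    (hmin : ∀ i, f i ∉ Ideal.span (f '' {j | j ≠ i}))
    (h1lin : ∀ i ≤ s,
      LinearMap.ker (combMap f) ⊓ suppLT (MvPolynomial (Fin n) K) s i =
        Submodule.span (MvPolynomial (Fin n) K)
          {g | g ∈ LinearMap.ker (combMap f) ⊓ suppLT (MvPolynomial (Fin n) K) s i ∧
            ∀ j, (g j).IsHomogeneous 1}) :
    ∀ i : Fin s, 0 < (i : ℕ) →
      DegOneGen ((Ideal.span (f '' {j | (j : ℕ) < (i : ℕ)})).colon (Ideal.span {f i})) :=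
  one_step_linear_implies_linear_quotients_general f h1lin
end

section
/- Let G be a finite simple graph and Γ a closed walk of G whose edge sequence has even length 2q. If some edge of G occurs in Γ both in an odd position and in an even position, then Γ is not primitive, i.e., Γ admits a proper subwalk. -/
/-- `w 0, w 1, …, w L` is a closed walk of length `L` in `G`. -/
def IsClosedWalk {V : Type*} (G : SimpleGraph V) (w : ℕ → V) (L : ℕ) : Prop :=
  w L = w 0 ∧ ∀ i < L, G.Adj (w i) (w (i + 1))

/-- The multiset of edges occurring in odd position in an even closed walk of length `2q`:
`{w 0, w 1}, {w 2, w 3}, …`. -/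
def oddEdges {V : Type*} (w : ℕ → V) (q : ℕ) : Multiset (Sym2 V) :=
  (Multiset.range q).map fun i => s(w (2 * i), w (2 * i + 1))

/-- The multiset of edges occurring in even position in an even closed walk of length `2q`:
`{w 1, w 2}, {w 3, w 4}, …`. -/
def evenEdges {V : Type*} (w : ℕ → V) (q : ℕ) : Multiset (Sym2 V) :=
  (Multiset.range q).map fun i => s(w (2 * i + 1), w (2 * i + 2))

/-- The even closed walk `w` of length `2q` admits a proper subwalk: an even closed walk
with strictly fewer edges whose odd-position edges are (with multiplicity) odd-position
edges of `w` and likewise for the even-position edges. -/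
def HasProperSubwalk {V : Type*} (G : SimpleGraph V) (w : ℕ → V) (q : ℕ) : Prop :=
  ∃ (r : ℕ) (w' : ℕ → V), 1 ≤ r ∧ r < q ∧ IsClosedWalk G w' (2 * r) ∧
    oddEdges w' r ≤ oddEdges w q ∧ evenEdges w' r ≤ evenEdges w q

/-- If in an even closed walk of length `2q ≥ 4` some edge occurs both in an odd and in
an even position, then the walk is not primitive: it admits a proper subwalk. -/
theorem not_primitive_of_repeated_edge {V : Type*} (G : SimpleGraph V)
    (w : ℕ → V) (q : ℕ) (hq : 2 ≤ q)
    (hw : IsClosedWalk G w (2 * q))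
    (hdup : ∃ i < q, ∃ j < q, s(w (2 * i), w (2 * i + 1)) = s(w (2 * j + 1), w (2 * j + 2))) :
    HasProperSubwalk G w q := by
  obtain ⟨i, hi, j, hj, he⟩ := hdup
  -- the trivial 2-cycle traversing the duplicated edge back and forth
  refine ⟨1, fun k => if k = 1 then w (2 * i + 1) else w (2 * i), le_refl 1,
    lt_of_lt_of_le one_lt_two hq, ⟨by norm_num, ?_⟩, ?_, ?_⟩
  · have hadj : G.Adj (w (2 * i)) (w (2 * i + 1)) := hw.2 (2 * i) (by omega)
    intro k hk
    interval_cases k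
    · simpa using hadj
    · simpa using hadj.symm
  · have : oddEdges (fun k => if k = 1 then w (2 * i + 1) else w (2 * i)) 1
        = {s(w (2 * i), w (2 * i + 1))} := by
      simp [oddEdges]
    rw [this, Multiset.singleton_le]
    exact Multiset.mem_map_of_mem _ (Multiset.mem_range.mpr hi)
  · have : evenEdges (fun k => if k = 1 then w (2 * i + 1) else w (2 * i)) 1
        = {s(w (2 * j + 1), w (2 * j + 2))} := by
      simp [evenEdges, Sym2.eq_swap, ← he]
    rw [this, Multiset.singleton_le]
    exact Multiset.mem_map_of_mem _ (Multiset.mem_range.mpr hj)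
end

section
/- Every primitive even closed walk Γ in a finite simple graph G is one of the following: (i) an even cycle; (ii) the concatenation of two odd cycles C_1, C_2 meeting in exactly one vertex; or (iii) a concatenation {C_1, p_1, C_2, p_2, ..., C_h, p_h} where each p_i is a path of length at least one and each C_i is an odd cycle such that consecutive cycles C_i and C_{i+1} (indices mod h) are vertex-disjoint. -/
/-- An even closed walk is primitive if it has no proper subwalk. -/
def IsPrimitive {V : Type*} (G : SimpleGraph V) (w : ℕ → V) (q : ℕ) : Prop :=
  ¬ HasProperSubwalk G w q

/-- Starting position of the `i`-th odd cycle in a walk of type (iii) whose cycles have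
lengths `c 0, c 1, …` and whose connecting paths have lengths `p 0, p 1, …`. -/
def segStart (c p : ℕ → ℕ) : ℕ → ℕ
  | 0 => 0
  | i + 1 => segStart c p i + c i + p i

/-- Type (ii): two odd cycles having exactly one vertex in common. -/
def IsTypeII {V : Type*} (w : ℕ → V) (q : ℕ) : Prop :=
  ∃ a b : ℕ, Odd a ∧ Odd b ∧ 3 ≤ a ∧ 3 ≤ b ∧ a + b = 2 * q ∧
    w a = w 0 ∧
    Set.InjOn w (Set.Iio a) ∧
    Set.InjOn w (Set.Ico a (a + b)) ∧
    ∀ i < a, ∀ j, a ≤ j → j < a + b → w i = w j → w i = w 0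

/-- Type (iii): odd cycles `C 1, …, C h` joined cyclically by paths `p 1, …, p h` of
length at least one, consecutive cycles being vertex-disjoint. -/
def IsTypeIII {V : Type*} (w : ℕ → V) (q : ℕ) : Prop :=
  ∃ (h : ℕ) (c p : ℕ → ℕ), 2 ≤ h ∧ segStart c p h = 2 * q ∧
    (∀ i < h, Odd (c i) ∧ 3 ≤ c i ∧ 1 ≤ p i) ∧
    -- each `C i` is a cycle
    (∀ i < h, w (segStart c p i + c i) = w (segStart c p i)) ∧
    (∀ i < h, Set.InjOn w (Set.Ico (segStart c p i) (segStart c p i + c i))) ∧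
    -- each connecting path has distinct vertices
    (∀ i < h, Set.InjOn w (Set.Icc (segStart c p i + c i) (segStart c p (i + 1)))) ∧
    -- consecutive cycles are vertex-disjoint
    (∀ i < h, ∀ x ∈ Set.Ico (segStart c p i) (segStart c p i + c i),
      ∀ y ∈ Set.Ico (segStart c p ((i + 1) % h))
        (segStart c p ((i + 1) % h) + c ((i + 1) % h)), w x ≠ w y)


section Proofs
variable {V : Type*} {G : SimpleGraph V}

lemma map_range_le_range (τ : ℕ → ℕ) (r q : ℕ) (hlt : ∀ i < r, τ i < q)
    (hinj : ∀ i < r, ∀ j < r, τ i = τ j → i = j) :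
    (Multiset.range r).map τ ≤ Multiset.range q := by
  have hnd : ((Multiset.range r).map τ).Nodup := by
    refine Multiset.Nodup.map_on ?_ (Multiset.nodup_range r)
    intro i hi j hj hij
    exact hinj i (by simpa using hi) j (by simpa using hj) hij
  rw [Multiset.le_iff_subset hnd]
  intro a ha
  rw [Multiset.mem_map] at ha
  obtain ⟨i, hi, rfl⟩ := ha
  rw [Multiset.mem_range] at hi ⊢
  exact hlt i hi

lemma map_range_eq_range {τ : ℕ → ℕ} {r : ℕ} (hlt : ∀ i < r, τ i < r)
    (hinj : ∀ i < r, ∀ j < r, τ i = τ j → i = j) :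
    (Multiset.range r).map τ = Multiset.range r := by
  refine Multiset.eq_of_le_of_card_le (map_range_le_range τ r r hlt hinj) (by simp)

lemma subwalk_of_embed (w : ℕ → V) (q : ℕ)
    (hw : IsClosedWalk G w (2 * q)) (w' : ℕ → V) (σ : ℕ → ℕ) (r : ℕ)
    (hr1 : 1 ≤ r) (hrq : r < q)
    (hclosed : w' (2 * r) = w' 0)
    (hlt : ∀ k < 2 * r, σ k < 2 * q)
    (hpar : ∀ k < 2 * r, σ k % 2 = k % 2)
    (hinj : ∀ k < 2 * r, ∀ l < 2 * r, σ k = σ l → k = l)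
    (hedge : ∀ k < 2 * r, s(w' k, w' (k + 1)) = s(w (σ k), w (σ k + 1))) :
    HasProperSubwalk G w q := by
  refine ⟨r, w', hr1, hrq, ⟨hclosed, ?_⟩, ?_, ?_⟩
  · intro i hi
    have h1 := hedge i hi
    have h2 := hw.2 (σ i) (hlt i hi)
    rw [Sym2.eq_iff] at h1
    rcases h1 with ⟨ha, hb⟩ | ⟨ha, hb⟩
    · rw [ha, hb]; exact h2
    · rw [ha, hb]; exact h2.symm
  · have h1 : oddEdges w' r = ((Multiset.range r).map (fun i => σ (2 * i) / 2)).map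
        (fun j => s(w (2 * j), w (2 * j + 1))) := by
      rw [Multiset.map_map]
      refine Multiset.map_congr rfl ?_
      intro i hi
      rw [Multiset.mem_range] at hi
      have h2i : 2 * i < 2 * r := by omega
      have he := hedge (2 * i) h2i
      have hp := hpar (2 * i) h2i
      have hdv : 2 * (σ (2 * i) / 2) = σ (2 * i) := by omega
      simp only [Function.comp_apply]
      rw [hdv]
      exact he
    rw [h1]
    show _ ≤ (Multiset.range q).map fun j => s(w (2 * j), w (2 * j + 1))
    refine Multiset.map_le_map (map_range_le_range _ r q ?_ ?_)
    · intro i hi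
      have := hlt (2 * i) (by omega)
      omega
    · intro i hi j hj hij
      have p1 := hpar (2 * i) (by omega)
      have p2 := hpar (2 * j) (by omega)
      have : σ (2 * i) = σ (2 * j) := by omega
      have := hinj (2 * i) (by omega) (2 * j) (by omega) this
      omega
  · have h1 : evenEdges w' r = ((Multiset.range r).map (fun i => σ (2 * i + 1) / 2)).map
        (fun j => s(w (2 * j + 1), w (2 * j + 2))) := by
      rw [Multiset.map_map]
      refine Multiset.map_congr rfl ?_
      intro i hi
      rw [Multiset.mem_range] at hi
      have h2i : 2 * i + 1 < 2 * r := by omega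
      have he := hedge (2 * i + 1) h2i
      have hp := hpar (2 * i + 1) h2i
      have hdv : 2 * (σ (2 * i + 1) / 2) + 1 = σ (2 * i + 1) := by omega
      simp only [Function.comp_apply]
      rw [show (2:ℕ) * (σ (2 * i + 1) / 2) + 2 = (2 * (σ (2 * i + 1) / 2) + 1) + 1 by ring, hdv]
      rw [show (2:ℕ) * i + 1 + 1 = 2 * i + 2 by ring] at he
      exact he
    rw [h1]
    show _ ≤ (Multiset.range q).map fun j => s(w (2 * j + 1), w (2 * j + 2))
    refine Multiset.map_le_map (map_range_le_range _ r q ?_ ?_)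
    · intro i hi
      have := hlt (2 * i + 1) (by omega)
      have := hpar (2 * i + 1) (by omega)
      omega
    · intro i hi j hj hij
      have p1 := hpar (2 * i + 1) (by omega)
      have p2 := hpar (2 * j + 1) (by omega)
      have : σ (2 * i + 1) = σ (2 * j + 1) := by omega
      have := hinj (2 * i + 1) (by omega) (2 * j + 1) (by omega) this
      omega


lemma subwalk_of_even_repeat (u : ℕ → V) (q : ℕ)
    (hu : IsClosedWalk G u (2 * q)) (i j : ℕ) (hij : i < j) (hj : j ≤ 2 * q)
    (hne : ¬(i = 0 ∧ j = 2 * q)) (heq : u i = u j) (hpar : (j - i) % 2 = 0) :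
    HasProperSubwalk G u q := by
  have hne' : i ≠ 0 ∨ j ≠ 2 * q := by tauto
  set r : ℕ := (j - i) / 2 with hr
  have hr2 : 2 * r = j - i := by omega
  have hr1 : 1 ≤ r := by omega
  have hrq : r < q := by omega
  rcases Nat.even_or_odd i with hi | hi
  · have hi2 : i % 2 = 0 := Nat.even_iff.1 hi
    refine subwalk_of_embed u q hu (fun k => u (i + k)) (fun k => i + k) r hr1 hrq ?_ ?_ ?_ ?_ ?_
    · show u (i + 2 * r) = u (i + 0)
      rw [show i + 2 * r = j by omega, show i + 0 = i by ring]
      exact heq.symm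
    · intro k hk; show i + k < 2 * q; omega
    · intro k hk; show (i + k) % 2 = k % 2; omega
    · intro k hk l hl h; have h' : i + k = i + l := h; omega
    · intro k hk; rfl
  · have hi2 : i % 2 = 1 := Nat.odd_iff.1 hi
    refine subwalk_of_embed u q hu (fun k => u (j - k)) (fun k => j - 1 - k) r hr1 hrq ?_ ?_ ?_ ?_ ?_
    · show u (j - 2 * r) = u (j - 0)
      rw [show j - 2 * r = i by omega, show j - 0 = j by omega]
      exact heq
    · intro k hk; show j - 1 - k < 2 * q; omega
    · intro k hk; show (j - 1 - k) % 2 = k % 2; omega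
    · intro k hk l hl h; have h' : j - 1 - k = j - 1 - l := h; omega
    · intro k hk
      show s(u (j - k), u (j - (k + 1))) = s(u (j - 1 - k), u (j - 1 - k + 1))
      rw [show j - (k + 1) = j - 1 - k by omega, show j - 1 - k + 1 = j - k by omega]
      exact Sym2.eq_swap

lemma subwalk_of_crossing (u : ℕ → V) (q : ℕ)
    (hu : IsClosedWalk G u (2 * q)) (i k j l : ℕ)
    (h1 : i < k) (h2 : k < j) (h3 : j < l) (h4 : l ≤ 2 * q)
    (heij : u i = u j) (hekl : u k = u l)
    (hparij : (j - i) % 2 = 1) (hparkl : (l - k) % 2 = 1) :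
    HasProperSubwalk G u q := by
  set a : ℕ := k - i with ha
  set c : ℕ := l - j with hc
  have hac : (a + c) % 2 = 0 := by omega
  set r : ℕ := (a + c) / 2 with hr
  have hr2 : 2 * r = a + c := by omega
  have hr1 : 1 ≤ r := by omega
  have hrq : r < q := by omega
  set w0 : ℕ → V := fun m => if m ≤ a then u (i + m) else u (l - (m - a)) with hw0
  set σ0 : ℕ → ℕ := fun m => if m < a then i + m else l - 1 - (m - a) with hσ0
  have hclosed0 : w0 (2 * r) = w0 0 := by
    show (if 2 * r ≤ a then u (i + 2 * r) else u (l - (2 * r - a)))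
       = (if 0 ≤ a then u (i + 0) else u (l - (0 - a)))
    rw [if_neg (by omega), if_pos (by omega)]
    rw [show l - (2 * r - a) = j by omega, show i + 0 = i by ring]
    exact heij.symm
  have hlt0 : ∀ m < 2 * r, σ0 m < 2 * q := by
    intro m hm
    show (if m < a then i + m else l - 1 - (m - a)) < 2 * q
    split <;> omega
  have hpar0 : ∀ m < 2 * r, σ0 m % 2 = (m + i) % 2 := by
    intro m hm
    show (if m < a then i + m else l - 1 - (m - a)) % 2 = (m + i) % 2
    split <;> omega
  have hinj0 : ∀ m < 2 * r, ∀ n < 2 * r, σ0 m = σ0 n → m = n := by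
    intro m hm n hn h
    simp only [hσ0] at h
    split at h <;> split at h <;> omega
  have hedge0 : ∀ m < 2 * r, s(w0 m, w0 (m + 1)) = s(u (σ0 m), u (σ0 m + 1)) := by
    intro m hm
    rcases lt_trichotomy m a with hma | hma | hma
    · show s(if m ≤ a then u (i + m) else _, if m + 1 ≤ a then u (i + (m + 1)) else u (l - (m + 1 - a)))
        = s(u (if m < a then i + m else _), u ((if m < a then i + m else l - 1 - (m - a)) + 1))
      rw [if_pos (by omega : m ≤ a), if_pos hma]
      by_cases hm1 : m + 1 ≤ a
      · rw [if_pos hm1]; rfl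
      · have hma1 : m + 1 = a := by omega
        rw [if_neg hm1]
        rw [show l - (m + 1 - a) = l by omega]
        have : u l = u (i + m + 1) := by
          rw [show i + m + 1 = k by omega]; exact hekl.symm
        rw [this]
    · -- m = a
      show s(if m ≤ a then u (i + m) else _, if m + 1 ≤ a then _ else u (l - (m + 1 - a)))
        = s(u (if m < a then _ else l - 1 - (m - a)), u ((if m < a then i + m else l - 1 - (m - a)) + 1))
      rw [if_pos (by omega : m ≤ a), if_neg (by omega : ¬ m + 1 ≤ a), if_neg (by omega : ¬ m < a)]
      rw [show l - (m + 1 - a) = l - 1 by omega, show l - 1 - (m - a) = l - 1 by omega,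
        show l - 1 + 1 = l by omega, show i + m = k by omega, hekl]
      exact Sym2.eq_swap
    · show s(if m ≤ a then _ else u (l - (m - a)), if m + 1 ≤ a then _ else u (l - (m + 1 - a)))
        = s(u (if m < a then _ else l - 1 - (m - a)), u ((if m < a then i + m else l - 1 - (m - a)) + 1))
      rw [if_neg (by omega : ¬ m ≤ a), if_neg (by omega : ¬ m + 1 ≤ a), if_neg (by omega : ¬ m < a)]
      have hd : m - a < c := by omega
      rw [show l - (m + 1 - a) = l - 1 - (m - a) by omega,
        show l - 1 - (m - a) + 1 = l - (m - a) by omega]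
      exact Sym2.eq_swap
  rcases Nat.even_or_odd i with hi | hi
  · have hi2 : i % 2 = 0 := Nat.even_iff.1 hi
    refine subwalk_of_embed u q hu w0 σ0 r hr1 hrq hclosed0 hlt0 ?_ hinj0 hedge0
    intro m hm
    have := hpar0 m hm
    omega
  · have hi2 : i % 2 = 1 := Nat.odd_iff.1 hi
    refine subwalk_of_embed u q hu (fun m => w0 (2 * r - m)) (fun m => σ0 (2 * r - 1 - m)) r hr1 hrq ?_ ?_ ?_ ?_ ?_
    · show w0 (2 * r - 2 * r) = w0 (2 * r - 0)
      rw [show 2 * r - 2 * r = 0 by omega, show 2 * r - 0 = 2 * r by omega]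
      exact hclosed0.symm
    · intro m hm; exact hlt0 _ (by omega)
    · intro m hm
      have := hpar0 (2 * r - 1 - m) (by omega)
      show σ0 (2 * r - 1 - m) % 2 = m % 2
      omega
    · intro m hm n hn h
      have := hinj0 (2 * r - 1 - m) (by omega) (2 * r - 1 - n) (by omega) h
      omega
    · intro m hm
      have he := hedge0 (2 * r - 1 - m) (by omega)
      show s(w0 (2 * r - m), w0 (2 * r - (m + 1))) = _
      rw [show 2 * r - (m + 1) = 2 * r - 1 - m by omega,
        show 2 * r - m = (2 * r - 1 - m) + 1 by omega]
      rw [Sym2.eq_swap]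
      exact he

lemma mod_succ_eq (a N : ℕ) : (a + 1) % N = (a % N + 1) % N := by
  conv_lhs => rw [Nat.add_mod a 1 N]
  rw [Nat.add_mod (a % N) 1 N, Nat.mod_mod]

lemma odd_mod (m q : ℕ) (hq : 1 ≤ q) : (2 * m + 1) % (2 * q) = 2 * (m % q) + 1 := by
  have hm := Nat.div_add_mod m q
  have h1 : 2 * m + 1 = 2 * (m % q) + 1 + (2 * q) * (m / q) := by
    have h2 : (2 * q) * (m / q) = 2 * (q * (m / q)) := by ring
    omega
  rw [h1, Nat.add_mul_mod_self_left]
  exact Nat.mod_eq_of_lt (by have := Nat.mod_lt m (show 0 < q by omega); omega)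

lemma even_mod (m q : ℕ) : (2 * m) % (2 * q) = 2 * (m % q) :=
  Nat.mul_mod_mul_left 2 m q

lemma adj_mod (w : ℕ → V) (q : ℕ) (hw : IsClosedWalk G w (2 * q)) (m : ℕ) (hm : m < 2 * q) :
    G.Adj (w m) (w ((m + 1) % (2 * q))) := by
  rcases Nat.lt_or_ge (m + 1) (2 * q) with h | h
  · rw [Nat.mod_eq_of_lt h]; exact hw.2 m hm
  · have hm1 : m + 1 = 2 * q := by omega
    rw [hm1, Nat.mod_self]
    have := hw.2 m hm
    rwa [hm1, hw.1] at this

lemma rot_closed (w : ℕ → V) (q : ℕ) (hq : 1 ≤ q) (hw : IsClosedWalk G w (2 * q)) (t : ℕ) :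
    IsClosedWalk G (fun i => w ((t + i) % (2 * q))) (2 * q) := by
  have hN : 0 < 2 * q := by omega
  constructor
  · show w ((t + 2 * q) % (2 * q)) = w ((t + 0) % (2 * q))
    rw [Nat.add_mod_right, Nat.add_zero]
  · intro i hi
    show G.Adj (w ((t + i) % (2 * q))) (w ((t + (i + 1)) % (2 * q)))
    have hsucc : (t + (i + 1)) % (2 * q) = ((t + i) % (2 * q) + 1) % (2 * q) := by
      rw [show t + (i + 1) = (t + i) + 1 by ring, mod_succ_eq]
    rw [hsucc]
    exact adj_mod w q hw _ (Nat.mod_lt _ hN)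

/-- edge at position `m` (circularly) -/
noncomputable def Ew (w : ℕ → V) (q : ℕ) (m : ℕ) : Sym2 V := s(w m, w ((m + 1) % (2 * q)))

lemma oddEdges_eq (w : ℕ → V) (q : ℕ) :
    oddEdges w q = (Multiset.range q).map (fun i => Ew w q (2 * i)) := by
  refine Multiset.map_congr rfl ?_
  intro i hi
  rw [Multiset.mem_range] at hi
  show _ = s(w (2 * i), w ((2 * i + 1) % (2 * q)))
  rw [Nat.mod_eq_of_lt (by omega)]

lemma evenEdges_eq (w : ℕ → V) (q : ℕ) (hc : w (2 * q) = w 0) :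
    evenEdges w q = (Multiset.range q).map (fun i => Ew w q (2 * i + 1)) := by
  refine Multiset.map_congr rfl ?_
  intro i hi
  rw [Multiset.mem_range] at hi
  show s(w (2 * i + 1), w (2 * i + 2)) = s(w (2 * i + 1), w ((2 * i + 1 + 1) % (2 * q)))
  rcases Nat.lt_or_ge (2 * i + 2) (2 * q) with h | h
  · rw [show (2 * i + 1 + 1) = 2 * i + 2 by ring, Nat.mod_eq_of_lt h]
  · have h2 : 2 * i + 1 + 1 = 2 * q := by omega
    rw [h2, Nat.mod_self, hc]

lemma rot_oddEdges (w : ℕ → V) (q : ℕ) (t : ℕ) :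
    oddEdges (fun i => w ((t + i) % (2 * q))) q
      = (Multiset.range q).map (fun i => Ew w q ((t + 2 * i) % (2 * q))) := by
  refine Multiset.map_congr rfl ?_
  intro i hi
  show s(w ((t + 2 * i) % (2 * q)), w ((t + (2 * i + 1)) % (2 * q)))
      = s(w ((t + 2 * i) % (2 * q)), w (((t + 2 * i) % (2 * q) + 1) % (2 * q)))
  rw [show t + (2 * i + 1) = (t + 2 * i) + 1 by ring, mod_succ_eq]

lemma rot_evenEdges (w : ℕ → V) (q : ℕ) (t : ℕ) :
    evenEdges (fun i => w ((t + i) % (2 * q))) q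
      = (Multiset.range q).map (fun i => Ew w q ((t + (2 * i + 1)) % (2 * q))) := by
  refine Multiset.map_congr rfl ?_
  intro i hi
  show s(w ((t + (2 * i + 1)) % (2 * q)), w ((t + (2 * i + 2)) % (2 * q)))
      = s(w ((t + (2 * i + 1)) % (2 * q)), w (((t + (2 * i + 1)) % (2 * q) + 1) % (2 * q)))
  rw [show t + (2 * i + 2) = (t + (2 * i + 1)) + 1 by ring, mod_succ_eq]

lemma shift_range (s q : ℕ) (hq : 1 ≤ q) :
    (Multiset.range q).map (fun i => (s + i) % q) = Multiset.range q := by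
  refine map_range_eq_range (fun i hi => Nat.mod_lt _ (by omega)) ?_
  intro i hi j hj hij
  have h1 : Nat.ModEq q (s + i) (s + j) := hij
  have h2 : Nat.ModEq q i j := Nat.ModEq.add_left_cancel' s h1
  have h3 : i % q = j % q := h2
  rwa [Nat.mod_eq_of_lt hi, Nat.mod_eq_of_lt hj] at h3


lemma rot_oddEdges_even (w : ℕ → V) (q : ℕ) (hq : 1 ≤ q) (s : ℕ) :
    oddEdges (fun i => w ((2 * s + i) % (2 * q))) q = oddEdges w q := by
  rw [rot_oddEdges, oddEdges_eq w q]
  have h1 : ∀ i ∈ Multiset.range q,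
      Ew w q ((2 * s + 2 * i) % (2 * q)) = (fun j => Ew w q (2 * j)) ((fun i => (s + i) % q) i) := by
    intro i hi
    show Ew w q ((2 * s + 2 * i) % (2 * q)) = Ew w q (2 * ((s + i) % q))
    rw [show 2 * s + 2 * i = 2 * (s + i) by ring, even_mod]
  rw [Multiset.map_congr rfl h1]
  show Multiset.map ((fun j => Ew w q (2 * j)) ∘ (fun i => (s + i) % q)) (Multiset.range q) = _
  rw [← Multiset.map_map (fun j => Ew w q (2 * j)) (fun i => (s + i) % q), shift_range s q hq]

lemma rot_evenEdges_even (w : ℕ → V) (q : ℕ) (hq : 1 ≤ q) (hc : w (2 * q) = w 0) (s : ℕ) :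
    evenEdges (fun i => w ((2 * s + i) % (2 * q))) q = evenEdges w q := by
  rw [rot_evenEdges, evenEdges_eq w q hc]
  have h1 : ∀ i ∈ Multiset.range q,
      Ew w q ((2 * s + (2 * i + 1)) % (2 * q))
        = (fun j => Ew w q (2 * j + 1)) ((fun i => (s + i) % q) i) := by
    intro i hi
    show Ew w q ((2 * s + (2 * i + 1)) % (2 * q)) = Ew w q (2 * ((s + i) % q) + 1)
    rw [show 2 * s + (2 * i + 1) = 2 * (s + i) + 1 by ring, odd_mod _ _ hq]
  rw [Multiset.map_congr rfl h1]
  show Multiset.map ((fun j => Ew w q (2 * j + 1)) ∘ (fun i => (s + i) % q)) (Multiset.range q) = _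
  rw [← Multiset.map_map (fun j => Ew w q (2 * j + 1)) (fun i => (s + i) % q), shift_range s q hq]

lemma rot_oddEdges_odd (w : ℕ → V) (q : ℕ) (hq : 1 ≤ q) (hc : w (2 * q) = w 0) (s : ℕ) :
    oddEdges (fun i => w (((2 * s + 1) + i) % (2 * q))) q = evenEdges w q := by
  rw [rot_oddEdges, evenEdges_eq w q hc]
  have h1 : ∀ i ∈ Multiset.range q,
      Ew w q (((2 * s + 1) + 2 * i) % (2 * q))
        = (fun j => Ew w q (2 * j + 1)) ((fun i => (s + i) % q) i) := by
    intro i hi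
    show Ew w q (((2 * s + 1) + 2 * i) % (2 * q)) = Ew w q (2 * ((s + i) % q) + 1)
    rw [show (2 * s + 1) + 2 * i = 2 * (s + i) + 1 by ring, odd_mod _ _ hq]
  rw [Multiset.map_congr rfl h1]
  show Multiset.map ((fun j => Ew w q (2 * j + 1)) ∘ (fun i => (s + i) % q)) (Multiset.range q) = _
  rw [← Multiset.map_map (fun j => Ew w q (2 * j + 1)) (fun i => (s + i) % q), shift_range s q hq]

lemma rot_evenEdges_odd (w : ℕ → V) (q : ℕ) (hq : 1 ≤ q) (s : ℕ) :
    evenEdges (fun i => w (((2 * s + 1) + i) % (2 * q))) q = oddEdges w q := by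
  rw [rot_evenEdges, oddEdges_eq w q]
  have h1 : ∀ i ∈ Multiset.range q,
      Ew w q (((2 * s + 1) + (2 * i + 1)) % (2 * q))
        = (fun j => Ew w q (2 * j)) ((fun i => ((s + 1) + i) % q) i) := by
    intro i hi
    show Ew w q (((2 * s + 1) + (2 * i + 1)) % (2 * q)) = Ew w q (2 * (((s + 1) + i) % q))
    rw [show (2 * s + 1) + (2 * i + 1) = 2 * ((s + 1) + i) by ring, even_mod]
  rw [Multiset.map_congr rfl h1]
  show Multiset.map ((fun j => Ew w q (2 * j)) ∘ (fun i => ((s + 1) + i) % q)) (Multiset.range q) = _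
  rw [← Multiset.map_map (fun j => Ew w q (2 * j)) (fun i => ((s + 1) + i) % q), shift_range (s + 1) q hq]

lemma rev_closed (w'' : ℕ → V) (r : ℕ) (hcw : IsClosedWalk G w'' (2 * r)) :
    IsClosedWalk G (fun k => w'' (2 * r - k)) (2 * r) := by
  constructor
  · show w'' (2 * r - 2 * r) = w'' (2 * r - 0)
    rw [show 2 * r - 2 * r = 0 by omega, show 2 * r - 0 = 2 * r by omega]
    exact hcw.1.symm
  · intro k hk
    show G.Adj (w'' (2 * r - k)) (w'' (2 * r - (k + 1)))
    have := hcw.2 (2 * r - (k + 1)) (by omega)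
    rw [show 2 * r - (k + 1) + 1 = 2 * r - k by omega] at this
    exact this.symm

lemma rev_oddEdges (w'' : ℕ → V) (r : ℕ) :
    oddEdges (fun k => w'' (2 * r - k)) r = evenEdges w'' r := by
  show (Multiset.range r).map (fun i => s(w'' (2 * r - 2 * i), w'' (2 * r - (2 * i + 1)))) = _
  have h1 : ∀ i ∈ Multiset.range r,
      s(w'' (2 * r - 2 * i), w'' (2 * r - (2 * i + 1)))
        = (fun j => s(w'' (2 * j + 1), w'' (2 * j + 2))) ((fun i => r - 1 - i) i) := by
    intro i hi
    rw [Multiset.mem_range] at hi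
    show s(w'' (2 * r - 2 * i), w'' (2 * r - (2 * i + 1)))
        = s(w'' (2 * (r - 1 - i) + 1), w'' (2 * (r - 1 - i) + 2))
    rw [show 2 * (r - 1 - i) + 1 = 2 * r - (2 * i + 1) by omega,
      show 2 * (r - 1 - i) + 2 = 2 * r - 2 * i by omega]
    exact Sym2.eq_swap
  rw [Multiset.map_congr rfl h1]
  show Multiset.map ((fun j => s(w'' (2 * j + 1), w'' (2 * j + 2))) ∘ (fun i => r - 1 - i)) (Multiset.range r) = _
  rw [← Multiset.map_map (fun j => s(w'' (2 * j + 1), w'' (2 * j + 2))) (fun i => r - 1 - i),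
    map_range_eq_range (fun i hi => by omega) (fun i hi j hj hij => by omega)]
  rfl

lemma rev_evenEdges (w'' : ℕ → V) (r : ℕ) :
    evenEdges (fun k => w'' (2 * r - k)) r = oddEdges w'' r := by
  show (Multiset.range r).map (fun i => s(w'' (2 * r - (2 * i + 1)), w'' (2 * r - (2 * i + 2)))) = _
  have h1 : ∀ i ∈ Multiset.range r,
      s(w'' (2 * r - (2 * i + 1)), w'' (2 * r - (2 * i + 2)))
        = (fun j => s(w'' (2 * j), w'' (2 * j + 1))) ((fun i => r - 1 - i) i) := by
    intro i hi
    rw [Multiset.mem_range] at hi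
    show s(w'' (2 * r - (2 * i + 1)), w'' (2 * r - (2 * i + 2)))
        = s(w'' (2 * (r - 1 - i)), w'' (2 * (r - 1 - i) + 1))
    rw [show 2 * (r - 1 - i) + 1 = 2 * r - (2 * i + 1) by omega,
      show 2 * (r - 1 - i) = 2 * r - (2 * i + 2) by omega]
    exact Sym2.eq_swap
  rw [Multiset.map_congr rfl h1]
  show Multiset.map ((fun j => s(w'' (2 * j), w'' (2 * j + 1))) ∘ (fun i => r - 1 - i)) (Multiset.range r) = _
  rw [← Multiset.map_map (fun j => s(w'' (2 * j), w'' (2 * j + 1))) (fun i => r - 1 - i),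
    map_range_eq_range (fun i hi => by omega) (fun i hi j hj hij => by omega)]
  rfl

lemma rot_primitive (w : ℕ → V) (q : ℕ) (hq : 1 ≤ q) (hw : IsClosedWalk G w (2 * q))
    (hp : IsPrimitive G w q) (t : ℕ) : IsPrimitive G (fun i => w ((t + i) % (2 * q))) q := by
  rintro ⟨r, w'', h1, h2, hcw, ho, he⟩
  rcases Nat.even_or_odd t with ht | ht
  · obtain ⟨s, hs⟩ := ht
    have hs' : t = 2 * s := by omega
    subst hs'
    rw [rot_oddEdges_even w q hq s] at ho
    rw [rot_evenEdges_even w q hq hw.1 s] at he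
    exact hp ⟨r, w'', h1, h2, hcw, ho, he⟩
  · obtain ⟨s, hs⟩ := ht
    subst hs
    rw [rot_oddEdges_odd w q hq hw.1 s] at ho
    rw [rot_evenEdges_odd w q hq s] at he
    refine hp ⟨r, (fun k => w'' (2 * r - k)), h1, h2, rev_closed w'' r hcw, ?_, ?_⟩
    · rw [rev_oddEdges]; exact he
    · rw [rev_evenEdges]; exact ho


/-- minimal arc: a chord of the circular walk with no chord strictly inside -/
def MinArc {V : Type*} (u : ℕ → V) (N s c : ℕ) : Prop :=
  0 < c ∧ c < N ∧ u s = u (s + c) ∧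
    ∀ x y, s ≤ x → x < y → y ≤ s + c → ¬(x = s ∧ y = s + c) → u x ≠ u y

lemma cA (u : ℕ → V) (q : ℕ) (hucl : IsClosedWalk G u (2 * q)) (hup : IsPrimitive G u q)
    {x y : ℕ} (hxy : x < y) (hy : y < 2 * q) (he : u x = u y) : (y - x) % 2 = 1 := by
  by_contra h
  exact hup (subwalk_of_even_repeat u q hucl x y hxy (by omega) (by omega) he (by omega))

lemma cB (u : ℕ → V) (q : ℕ) (hucl : IsClosedWalk G u (2 * q)) (hup : IsPrimitive G u q)
    {i k j l : ℕ} (h1 : i < k) (h2 : k < j) (h3 : j < l) (h4 : l < 2 * q)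
    (he1 : u i = u j) (he2 : u k = u l) : False := by
  have p1 : (j - i) % 2 = 1 := cA u q hucl hup (by omega) (by omega) he1
  have p2 : (l - k) % 2 = 1 := cA u q hucl hup (by omega) (by omega) he2
  exact hup (subwalk_of_crossing u q hucl i k j l h1 h2 h3 (by omega) he1 he2 p1 p2)

lemma cC (u : ℕ → V) (q : ℕ) (hucl : IsClosedWalk G u (2 * q)) (hup : IsPrimitive G u q)
    {x a b : ℕ} (ha : 0 < a) (hab : a < b) (hb : x + b < 2 * q)
    (h1 : u x = u (x + a)) (h2 : u x = u (x + b)) : False := by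
  have p1 : (x + a - x) % 2 = 1 := cA u q hucl hup (by omega) (by omega) h1
  have p2 : (x + b - x) % 2 = 1 := cA u q hucl hup (by omega) (by omega) h2
  have p3 : (x + b - (x + a)) % 2 = 1 :=
    cA u q hucl hup (by omega) (by omega) (h1.symm.trans h2)
  omega

lemma exists_minArc (u : ℕ → V) (N : ℕ) :
    ∀ c, ∀ s, 0 < c → c < N → u s = u (s + c) →
      ∃ s' c', s ≤ s' ∧ s' + c' ≤ s + c ∧ MinArc u N s' c' := by
  intro c
  induction c using Nat.strong_induction_on with
  | _ c ih =>
    intro s hc hcN he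
    by_cases hmin : ∀ x y, s ≤ x → x < y → y ≤ s + c → ¬(x = s ∧ y = s + c) → u x ≠ u y
    · exact ⟨s, c, le_refl s, le_refl (s + c), hc, hcN, he, hmin⟩
    · push_neg at hmin
      obtain ⟨x, y, hsx, hxy, hys, hne, heq⟩ := hmin
      have hlt : y - x < c := by omega
      obtain ⟨s', c', h1, h2, h3⟩ := ih (y - x) hlt x (by omega) (by omega)
        (by rw [show x + (y - x) = y by omega]; exact heq)
      exact ⟨s', c', by omega, by omega, h3⟩

lemma minArc_unique {u : ℕ → V} {N s c c' : ℕ} (h : MinArc u N s c) (h' : MinArc u N s c') :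
    c = c' := by
  have hc1 := h.1
  have hc2 := h'.1
  rcases lt_trichotomy c c' with hlt | he | hlt
  · exact absurd h.2.2.1 (h'.2.2.2 s (s + c) (le_refl s) (by omega) (by omega) (by omega))
  · exact he
  · exact absurd h'.2.2.1 (h.2.2.2 s (s + c') (le_refl s) (by omega) (by omega) (by omega))

lemma injOn_of_ne {u : ℕ → V} {A : Set ℕ}
    (h : ∀ x y, x ∈ A → y ∈ A → x < y → u x ≠ u y) : Set.InjOn u A := by
  intro x hx y hy hxy
  rcases lt_trichotomy x y with h' | h' | h'
  · exact absurd hxy (h x y hx hy h')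
  · exact h'
  · exact absurd hxy.symm (h y x hy hx h')


lemma cC' (u : ℕ → V) (q : ℕ) (hucl : IsClosedWalk G u (2 * q)) (hup : IsPrimitive G u q)
    {p1 p2 p3 : ℕ} (h12 : p1 < p2) (h23 : p2 < p3) (h3 : p3 < 2 * q)
    (e2 : u p1 = u p2) (e3 : u p1 = u p3) : False := by
  refine cC u q hucl hup (a := p2 - p1) (b := p3 - p1) (x := p1) (by omega) (by omega) (by omega) ?_ ?_
  · rw [show p1 + (p2 - p1) = p2 by omega]; exact e2
  · rw [show p1 + (p3 - p1) = p3 by omega]; exact e3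

section Arcs
variable (u : ℕ → V) (q : ℕ) (hq : 1 ≤ q) (hucl : IsClosedWalk G u (2 * q))
  (hup : IsPrimitive G u q)
  (hper : ∀ i, u (i % (2 * q)) = u i) (c0 : ℕ) (hmin0 : MinArc u (2 * q) 0 c0)

include hmin0 in
lemma he0' : u 0 = u c0 := by
  have := hmin0.2.2.1
  rwa [Nat.zero_add] at this

include hucl hup hmin0 in
lemma chord_right {x y : ℕ} (hxy : x < y) (hy : y < 2 * q) (he : u x = u y)
    (hne : ¬(x = 0 ∧ y = c0)) : c0 < x := by
  have hc0 := hmin0.1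
  have hc0N := hmin0.2.1
  have he0 := he0' u q c0 hmin0
  rcases Nat.lt_trichotomy x c0 with hx | hx | hx
  · exfalso
    rcases Nat.eq_zero_or_pos x with hx0 | hx0
    · subst hx0
      have hyne : y ≠ c0 := fun h => hne ⟨rfl, h⟩
      rcases Nat.lt_trichotomy y c0 with hy' | hy' | hy'
      · exact cC' u q hucl hup (p1 := 0) hxy hy' hc0N he he0
      · exact hyne hy'
      · exact cC' u q hucl hup (p1 := 0) hc0 hy' hy he0 he
    · rcases Nat.lt_trichotomy y c0 with hy' | hy' | hy'
      · exact hmin0.2.2.2 x y (Nat.zero_le _) hxy (by omega) (by omega) he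
      · subst hy'
        exact cC' u q hucl hup (p1 := 0) hx0 hx hy (he0.trans he.symm) he0
      · exact cB u q hucl hup hx0 hx hy' hy he0 he
  · subst hx
    exact absurd (he0.trans he) (fun hcon => cC' u q hucl hup (p1 := 0) hc0 hxy hy he0 hcon)
  · exact hx

include hucl hup hper hmin0 in
lemma minArc_bounds {s c : ℕ} (hm : MinArc u (2 * q) s c) (hs0 : 0 < s) (hsN : s < 2 * q)
    (hsec : ∃ a b, a < b ∧ b < 2 * q ∧ u a = u b ∧ ¬(a = 0 ∧ b = c0)) :
    c0 < s ∧ s + c < 2 * q := by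
  have hc0 := hmin0.1
  have hc0N := hmin0.2.1
  have he0 := he0' u q c0 hmin0
  have hc := hm.1
  have hcN := hm.2.1
  have hes := hm.2.2.1
  have hstep1 : c0 < s := by
    rcases Nat.lt_trichotomy s c0 with hx | hx | hx
    · exfalso
      by_cases h1 : s + c ≤ c0
      · exact hmin0.2.2.2 s (s + c) (Nat.zero_le _) (by omega) (by omega) (by omega) hes
      · by_cases h2 : s + c < 2 * q
        · exact cB u q hucl hup hs0 hx (by omega) h2 he0 hes
        · by_cases h3 : s + c = 2 * q
          · have hso : u s = u 0 := hes.trans (by rw [h3, hucl.1])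
            exact cC' u q hucl hup (p1 := 0) hs0 hx hc0N hso.symm he0
          · have hmod : (s + c) % (2 * q) = s + c - 2 * q := by
              rw [Nat.mod_eq_sub_mod (by omega)]; exact Nat.mod_eq_of_lt (by omega)
            have he'' : u (s + c - 2 * q) = u s := by
              rw [← hmod, hper]; exact hes.symm
            exact hmin0.2.2.2 _ s (Nat.zero_le _) (by omega) (by omega) (by omega) he''
    · exfalso
      subst hx
      by_cases h2 : s + c < 2 * q
      · exact cC' u q hucl hup (p1 := 0) hs0 (by omega) h2 he0 (he0.trans hes)
      · by_cases h3 : s + c = 2 * q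
        · obtain ⟨a2, b2, hab, hb2, he2, hne2⟩ := hsec
          have ha2 : s < a2 := chord_right u q hucl hup s hmin0 hab hb2 he2 hne2
          exact hm.2.2.2 a2 b2 (by omega) hab (by omega) (by omega) he2
        · have hmod : (s + c) % (2 * q) = s + c - 2 * q := by
            rw [Nat.mod_eq_sub_mod (by omega)]; exact Nat.mod_eq_of_lt (by omega)
          have he'' : u (s + c - 2 * q) = u s := by
            rw [← hmod, hper]; exact hes.symm
          exact hmin0.2.2.2 _ s (Nat.zero_le _) (by omega) (by omega) (by omega) he''
    · exact hx
  refine ⟨hstep1, ?_⟩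
  by_cases h2 : s + c < 2 * q
  · exact h2
  · exfalso
    by_cases h3 : s + c = 2 * q
    · have hso : u 0 = u s := (hes.trans (by rw [h3, hucl.1])).symm
      exact cC' u q hucl hup (p1 := 0) hc0 hstep1 hsN he0 hso
    · have hmod : (s + c) % (2 * q) = s + c - 2 * q := by
        rw [Nat.mod_eq_sub_mod (by omega)]; exact Nat.mod_eq_of_lt (by omega)
      have he'' : u (s + c - 2 * q) = u s := by
        rw [← hmod, hper]; exact hes.symm
      rcases Nat.lt_trichotomy (s + c - 2 * q) c0 with he3 | he3 | he3
      · exact cB u q hucl hup (by omega) he3 hstep1 hsN he0 he''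
      · have : u c0 = u s := by rw [← he3]; exact he''
        exact cC' u q hucl hup (p1 := 0) hc0 hstep1 hsN he0 (he0.trans this)
      · have h2qc0 : u (2 * q + c0) = u c0 := by
          rw [← hper (2 * q + c0), Nat.add_mod_left, Nat.mod_eq_of_lt hc0N]
        have hvv : u (2 * q) = u (2 * q + c0) := by
          rw [hucl.1, h2qc0]; exact he0
        exact hm.2.2.2 (2 * q) (2 * q + c0) (by omega) (by omega) (by omega) (by omega) hvv

include hucl hup in
lemma minArc_sep {s c s' c' : ℕ} (h : MinArc u (2 * q) s c) (h' : MinArc u (2 * q) s' c')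
    (hss : s < s') (hb : s + c < 2 * q) (hb' : s' + c' < 2 * q) : s + c < s' := by
  have hc := h.1
  have hc' := h'.1
  have hes := h.2.2.1
  have hes' := h'.2.2.1
  by_contra hcon
  push_neg at hcon
  rcases eq_or_lt_of_le hcon with heq | hlt
  · -- s' = s + c
    have hes2 := hes'
    rw [heq] at hes2
    exact cC' u q hucl hup (p1 := s) (by omega) (by omega) (by omega) hes (hes.trans hes2)
  · rcases Nat.lt_trichotomy (s' + c') (s + c) with h1 | h1 | h1
    · exact h.2.2.2 s' (s' + c') (by omega) (by omega) (by omega) (by omega) hes'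
    · have e2 : u s = u s' := by
        rw [hes, ← h1, ← hes']
      exact cC' u q hucl hup (p1 := s) hss hlt (by omega) e2 hes
    · exact cB u q hucl hup hss hlt h1 hb' hes hes'

include hucl hup in
lemma minArc_disj {s c s' c' : ℕ} (h : MinArc u (2 * q) s c) (h' : MinArc u (2 * q) s' c')
    (hgap : s + c < s') (hb' : s' + c' < 2 * q) {x y : ℕ}
    (hx1 : s ≤ x) (hx2 : x < s + c) (hy1 : s' ≤ y) (hy2 : y < s' + c')
    (he : u x = u y) : False := by
  have hes := h.2.2.1
  rcases eq_or_lt_of_le hx1 with hxs | hxs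
  · rw [← hxs] at he
    exact cC' u q hucl hup (p1 := s) (by have := h.1; omega) (by omega) (by omega) hes he
  · exact cB u q hucl hup hxs hx2 (by omega) (by omega) hes he

include hq hucl hup hmin0 in
lemma typeII_case
    (hsec : ∀ a b, a < b → b < 2 * q → u a = u b → a = 0 ∧ b = c0) : IsTypeII u q := by
  have hc0 := hmin0.1
  have hc0N := hmin0.2.1
  have he0 := he0' u q c0 hmin0
  have hodd : (c0 - 0) % 2 = 1 := cA u q hucl hup hc0 hc0N he0
  have h3a : 3 ≤ c0 := by
    by_contra hcon
    have hc01 : c0 = 1 := by omega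
    have h1 := (hucl.2 0 (by omega)).ne
    apply h1
    show u 0 = u (0 + 1)
    rw [show 0 + 1 = c0 by omega]
    exact he0
  have h3b : 3 ≤ 2 * q - c0 := by
    by_contra hcon
    have hc01 : c0 = 2 * q - 1 := by omega
    have h1 := (hucl.2 (2 * q - 1) (by omega)).ne
    apply h1
    rw [show 2 * q - 1 + 1 = 2 * q by omega, hucl.1, show 2 * q - 1 = c0 by omega]
    exact he0.symm
  refine ⟨c0, 2 * q - c0, Nat.odd_iff.2 (by omega), Nat.odd_iff.2 (by omega), h3a, h3b,
    by omega, he0.symm, ?_, ?_, ?_⟩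
  · refine injOn_of_ne ?_
    intro x y hx hy hxy heq
    have hx' : x < c0 := hx
    have hy' : y < c0 := hy
    have := hsec x y hxy (by omega) heq
    omega
  · refine injOn_of_ne ?_
    intro x y hx hy hxy heq
    have hx' : c0 ≤ x ∧ x < c0 + (2 * q - c0) := hx
    have hy' : c0 ≤ y ∧ y < c0 + (2 * q - c0) := hy
    have := hsec x y hxy (by omega) heq
    omega
  · intro i hi j hj1 hj2 heq
    have h1 := hsec i j (by omega) (by omega) heq
    rw [h1.1]

include hq hucl hup hper hmin0 in
lemma typeIII_case
    (hsec : ∃ a b, a < b ∧ b < 2 * q ∧ u a = u b ∧ ¬(a = 0 ∧ b = c0)) : IsTypeIII u q := by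
  classical
  have hc0 := hmin0.1
  have hc0N := hmin0.2.1
  have he0 := he0' u q c0 hmin0
  let PS : ℕ → Prop := fun m => m < 2 * q ∧ ∃ c, MinArc u (2 * q) m c
  have hex : ∀ a : ℕ, ∃ m, (a < m ∨ m = 2 * q) ∧ (m = 2 * q ∨ PS m) :=
    fun a => ⟨2 * q, Or.inr rfl, Or.inl rfl⟩
  let nxt : ℕ → ℕ := fun a => Nat.find (hex a)
  have hnxt_spec : ∀ a, (a < nxt a ∨ nxt a = 2 * q) ∧ (nxt a = 2 * q ∨ PS (nxt a)) :=
    fun a => Nat.find_spec (hex a)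
  have hnxt_min : ∀ a m, m < nxt a → ¬((a < m ∨ m = 2 * q) ∧ (m = 2 * q ∨ PS m)) :=
    fun a m h => Nat.find_min (hex a) h
  have hnxt_le : ∀ a, nxt a ≤ 2 * q :=
    fun a => Nat.find_min' (hex a) ⟨Or.inr rfl, Or.inl rfl⟩
  have hnxt_gt : ∀ a, a < 2 * q → a < nxt a := by
    intro a ha
    rcases (hnxt_spec a).1 with h | h
    · exact h
    · omega
  have hnxt_gapfree : ∀ a m, a < m → m < nxt a → ¬ PS m := by
    intro a m h1 h2 hPS
    exact hnxt_min a m h2 ⟨Or.inl h1, Or.inr hPS⟩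
  let sq : ℕ → ℕ := fun i => Nat.rec 0 (fun _ ih => nxt ih) i
  have hsq0 : sq 0 = 0 := rfl
  have hsqS : ∀ i, sq (i + 1) = nxt (sq i) := fun i => rfl
  have hsq_le : ∀ i, sq i ≤ 2 * q := by
    intro i
    induction i with
    | zero => omega
    | succ n ih => rw [hsqS]; exact hnxt_le _
  have hnxtN : nxt (2 * q) = 2 * q := by
    have h := (hnxt_spec (2 * q)).1
    have := hnxt_le (2 * q)
    omega
  have hreach : ∃ i, sq i = 2 * q := by
    have key : ∀ i, sq i = 2 * q ∨ i ≤ sq i := by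
      intro i
      induction i with
      | zero => right; omega
      | succ n ih =>
        rcases ih with h | h
        · left; rw [hsqS, h, hnxtN]
        · rcases Nat.lt_or_ge (sq n) (2 * q) with h2 | h2
          · right; have := hnxt_gt (sq n) h2; rw [hsqS]; omega
          · left
            have := hsq_le n
            have hsn : sq n = 2 * q := by omega
            rw [hsqS, hsn, hnxtN]
    rcases key (2 * q) with h | h
    · exact ⟨2 * q, h⟩
    · exact ⟨2 * q, by have := hsq_le (2 * q); omega⟩
  let H : ℕ := @Nat.find (fun i => sq i = 2 * q) (fun _ => Classical.propDecidable _) hreach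
  have hH : sq H = 2 * q := @Nat.find_spec (fun i => sq i = 2 * q) (fun _ => Classical.propDecidable _) hreach
  have hHlt : ∀ i, i < H → sq i < 2 * q :=
    fun i hi => lt_of_le_of_ne (hsq_le i) (@Nat.find_min (fun i => sq i = 2 * q) (fun _ => Classical.propDecidable _) hreach i hi)
  have hPS0 : PS 0 := ⟨by omega, c0, hmin0⟩
  have hPSsq : ∀ i, i < H → PS (sq i) := by
    intro i hi
    cases i with
    | zero => exact hPS0
    | succ n =>
      have h2 := (hnxt_spec (sq n)).2
      rw [← hsqS] at h2
      rcases h2 with h | h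
      · exact absurd h (@Nat.find_min (fun i => sq i = 2 * q) (fun _ => Classical.propDecidable _) hreach _ hi)
      · exact h
  have hH1 : 1 ≤ H := by
    rcases Nat.eq_zero_or_pos H with h | h
    · exfalso
      have h2 := hH
      rw [h] at h2
      rw [hsq0] at h2
      omega
    · exact h
  have hmono : ∀ i, i < H → sq i < sq (i + 1) := by
    intro i hi
    rw [hsqS]
    exact hnxt_gt _ (hHlt i hi)
  have hPSc : ∀ i, ∃ c, i < H → MinArc u (2 * q) (sq i) c := by
    intro i
    by_cases h : i < H
    · obtain ⟨c, hc⟩ := (hPSsq i h).2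
      exact ⟨c, fun _ => hc⟩
    · exact ⟨0, fun h' => absurd h' h⟩
  choose cF hcF using hPSc
  have hcF0 : cF 0 = c0 := minArc_unique (hcF 0 hH1) hmin0
  have hmono2 : ∀ j, j ≤ H → ∀ i, i < j → sq i < sq j := by
    intro j
    induction j with
    | zero => intro _ i hi; omega
    | succ n ih =>
      intro hj i hi
      have hn : sq n < sq (n + 1) := hmono n (by omega)
      rcases Nat.lt_or_ge i n with h | h
      · exact lt_trans (ih (by omega) i h) hn
      · have hin : i = n := by omega
        rw [hin]; exact hn
  have hbounds : ∀ i, 0 < i → i < H → c0 < sq i ∧ sq i + cF i < 2 * q := by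
    intro i h1 h2
    have hpos : 0 < sq i := by
      have := hmono2 i (le_of_lt h2) 0 h1
      omega
    exact minArc_bounds u q hucl hup hper c0 hmin0 (hcF i h2) hpos (hHlt i h2) hsec
  have harcB : ∀ i, i < H → sq i + cF i < 2 * q := by
    intro i hi
    rcases Nat.eq_zero_or_pos i with h | h
    · subst h
      have e1 : sq 0 = 0 := rfl
      have e2 := hcF0
      omega
    · exact (hbounds i h hi).2
  have hgap : ∀ i, i < H → sq i + cF i < sq (i + 1) := by
    intro i hi
    rcases Nat.lt_or_ge (i + 1) H with h2 | h2
    · exact minArc_sep u q hucl hup (hcF i hi) (hcF (i + 1) h2) (hmono i hi)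
        (harcB i hi) (harcB (i + 1) h2)
    · have hiH : i + 1 = H := by omega
      rw [hiH, hH]
      exact harcB i hi
  let pF : ℕ → ℕ := fun i => sq (i + 1) - sq i - cF i
  have hseg : ∀ i, i ≤ H → segStart cF pF i = sq i := by
    intro i
    induction i with
    | zero => intro _; rfl
    | succ n ih =>
      intro hn
      have h1 : segStart cF pF (n + 1) = segStart cF pF n + cF n + pF n := rfl
      rw [h1, ih (by omega)]
      have := hgap n (by omega)
      show sq n + cF n + (sq (n + 1) - sq n - cF n) = sq (n + 1)
      omega
  obtain ⟨a2, b2, hab2, hb2N, he2, hne2⟩ := hsec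
  have ha2 : c0 < a2 := chord_right u q hucl hup c0 hmin0 hab2 hb2N he2 hne2
  obtain ⟨s2, c2, hs2a, hs2b, hm2⟩ := exists_minArc u (2 * q) (b2 - a2) a2
    (by omega) (by omega) (by rw [show a2 + (b2 - a2) = b2 by omega]; exact he2)
  have hPSs2 : PS s2 := ⟨by have := hm2.1; omega, c2, hm2⟩
  have hH2 : 2 ≤ H := by
    by_contra hcon
    have hH1' : H = 1 := by omega
    have hsq1 : sq 1 = 2 * q := by rw [← hH1']; exact hH
    have hs2lt : s2 < nxt 0 := by
      have e1 : nxt 0 = sq 1 := rfl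
      rw [e1, hsq1]
      have := hm2.1
      omega
    exact hnxt_gapfree 0 s2 (by omega) hs2lt hPSs2
  refine ⟨H, cF, pF, hH2, ?_, ?_, ?_, ?_, ?_, ?_⟩
  · rw [hseg H (le_refl H)]; exact hH
  · intro i hi
    have hm := hcF i hi
    have hodd : (sq i + cF i - sq i) % 2 = 1 :=
      cA u q hucl hup (by have := hm.1; omega) (harcB i hi) hm.2.2.1
    have hne1 : cF i ≠ 1 := by
      intro h1
      have hadj := (hucl.2 (sq i) (by have := harcB i hi; have := hm.1; omega)).ne
      apply hadj
      have h2 := hm.2.2.1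
      rwa [h1] at h2
    refine ⟨Nat.odd_iff.2 (by omega), by omega, ?_⟩
    have := hgap i hi
    show 1 ≤ sq (i + 1) - sq i - cF i
    omega
  · intro i hi
    rw [hseg i (le_of_lt hi)]
    exact (hcF i hi).2.2.1.symm
  · intro i hi
    rw [hseg i (le_of_lt hi)]
    refine injOn_of_ne ?_
    intro x y hx hy hxy heq
    have hx' : sq i ≤ x ∧ x < sq i + cF i := hx
    have hy' : sq i ≤ y ∧ y < sq i + cF i := hy
    exact (hcF i hi).2.2.2 x y hx'.1 hxy (by omega) (by omega) heq
  · intro i hi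
    rw [hseg i (le_of_lt hi), hseg (i + 1) hi]
    refine injOn_of_ne ?_
    intro x y hx hy hxy heq
    have hx' : sq i + cF i ≤ x ∧ x ≤ sq (i + 1) := hx
    have hy' : sq i + cF i ≤ y ∧ y ≤ sq (i + 1) := hy
    rcases Nat.lt_or_ge y (2 * q) with hyN | hyN
    · obtain ⟨s3, c3, h3a, h3b, hm3⟩ := exists_minArc u (2 * q) (y - x) x
        (by omega) (by omega) (by rw [show x + (y - x) = y by omega]; exact heq)
      have hPS3 : PS s3 := ⟨by have := hm3.1; omega, c3, hm3⟩
      refine hnxt_gapfree (sq i) s3 ?_ ?_ hPS3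
      · have := (hcF i hi).1
        omega
      · have e : nxt (sq i) = sq (i + 1) := rfl
        rw [e]
        have := hm3.1
        omega
    · have hy2q : y = 2 * q := by have := hsq_le (i + 1); omega
      have hxN : x < 2 * q := by omega
      have heq0 : u x = u 0 := by rw [heq, hy2q, hucl.1]
      have hiH : i + 1 = H := by
        by_contra hcon
        have h4 : i + 1 < H := by omega
        have := hHlt (i + 1) h4
        omega
      have hi1 : 1 ≤ i := by omega
      have hx0 : c0 < x := by
        have h5 := (hbounds i hi1 hi).1
        have := (hcF i hi).1
        omega
      exact cC' u q hucl hup (p1 := 0) hc0 hx0 hxN he0 heq0.symm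
  · intro i hi x hx y hy heq
    rcases Nat.lt_or_ge (i + 1) H with h2 | h2
    · have hmod : (i + 1) % H = i + 1 := Nat.mod_eq_of_lt h2
      rw [hseg i (le_of_lt hi)] at hx
      rw [hmod, hseg (i + 1) (le_of_lt h2)] at hy
      have hx' : sq i ≤ x ∧ x < sq i + cF i := hx
      have hy' : sq (i + 1) ≤ y ∧ y < sq (i + 1) + cF (i + 1) := hy
      exact minArc_disj u q hucl hup (hcF i hi) (hcF (i + 1) h2) (hgap i hi)
        (harcB (i + 1) h2) hx'.1 hx'.2 hy'.1 hy'.2 heq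
    · have hiH : i + 1 = H := by omega
      have hmod : (i + 1) % H = 0 := by rw [hiH, Nat.mod_self]
      rw [hseg i (le_of_lt hi)] at hx
      rw [hmod] at hy
      have hseg0 : segStart cF pF 0 = 0 := rfl
      rw [hseg0] at hy
      have hx' : sq i ≤ x ∧ x < sq i + cF i := hx
      have hy' : 0 ≤ y ∧ y < 0 + cF 0 := hy
      have hi1 : 1 ≤ i := by omega
      have hgap0 : sq 0 + cF 0 < sq i := by
        have h5 := (hbounds i hi1 hi).1
        have e1 : sq 0 = 0 := rfl
        omega
      exact minArc_disj u q hucl hup (hcF 0 (by omega)) (hcF i hi) hgap0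
        (harcB i hi) (by have e1 : sq 0 = 0 := rfl; omega) (by have e1 : sq 0 = 0 := rfl; omega)
        hx'.1 hx'.2 heq.symm

end Arcs

lemma rot_per (w : ℕ → V) (q t : ℕ) :
    ∀ i, (fun i => w ((t + i) % (2 * q))) (i % (2 * q)) = (fun i => w ((t + i) % (2 * q))) i := by
  intro i
  show w ((t + i % (2 * q)) % (2 * q)) = w ((t + i) % (2 * q))
  rw [Nat.add_mod t (i % (2 * q)), Nat.mod_mod, ← Nat.add_mod]

lemma minArc_rot (w : ℕ → V) (q t c0 : ℕ) (htb : t + c0 < 2 * q)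
    (hmin : MinArc w (2 * q) t c0) :
    MinArc (fun i => w ((t + i) % (2 * q))) (2 * q) 0 c0 := by
  refine ⟨hmin.1, hmin.2.1, ?_, ?_⟩
  · show w ((t + 0) % (2 * q)) = w ((t + (0 + c0)) % (2 * q))
    rw [Nat.add_zero, Nat.zero_add, Nat.mod_eq_of_lt (by omega), Nat.mod_eq_of_lt htb]
    exact hmin.2.2.1
  · intro x y hx hxy hy hne heq
    have hx' : (t + x) % (2 * q) = t + x := Nat.mod_eq_of_lt (by omega)
    have hy' : (t + y) % (2 * q) = t + y := Nat.mod_eq_of_lt (by omega)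
    have heq' : w ((t + x) % (2 * q)) = w ((t + y) % (2 * q)) := heq
    rw [hx', hy'] at heq'
    exact hmin.2.2.2 (t + x) (t + y) (by omega) (by omega) (by omega) (by omega) heq'

end Proofs

/-- Classification of primitive even closed walks: every primitive even closed walk is
(i) an even cycle, or, up to a cyclic rotation, (ii) two odd cycles meeting in exactly
one vertex, or (iii) a cyclic concatenation `C 1, p 1, C 2, p 2, …, C h, p h` of odd
cycles joined by paths of length at least one, consecutive cycles being
vertex-disjoint. -/
theorem primitive_walk_classification {V : Type*} [Fintype V] (G : SimpleGraph V)
    (w : ℕ → V) (q : ℕ) (hq : 1 ≤ q)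
    (hw : IsClosedWalk G w (2 * q)) (hprim : IsPrimitive G w q) :
    Set.InjOn w (Set.Iio (2 * q)) ∨
    (∃ t, IsTypeII (fun i => w ((t + i) % (2 * q))) q) ∨
    (∃ t, IsTypeIII (fun i => w ((t + i) % (2 * q))) q) := by
  by_cases hchord : ∀ x y : ℕ, x < y → y < 2 * q → w x ≠ w y
  · left
    refine injOn_of_ne ?_
    intro x y hx hy hxy
    exact hchord x y hxy hy
  · push_neg at hchord
    obtain ⟨x, y, hxy, hyN, heq⟩ := hchord
    obtain ⟨t, c0, hxt, htc, hmin⟩ := exists_minArc w (2 * q) (y - x) x (by omega) (by omega)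
      (by rw [show x + (y - x) = y by omega]; exact heq)
    have htb : t + c0 < 2 * q := by omega
    have hucl := rot_closed w q hq hw t
    have hup := rot_primitive w q hq hw hprim t
    have hper := rot_per w q t
    have hmin0 := minArc_rot w q t c0 htb hmin
    by_cases hsec : ∀ a b : ℕ, a < b → b < 2 * q →
        (fun i => w ((t + i) % (2 * q))) a = (fun i => w ((t + i) % (2 * q))) b → a = 0 ∧ b = c0
    · right; left
      exact ⟨t, typeII_case (fun i => w ((t + i) % (2 * q))) q hq hucl hup c0 hmin0 hsec⟩
    · right; right
      push_neg at hsec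
      obtain ⟨a, b, hab, hbN, he, hne⟩ := hsec
      exact ⟨t, typeIII_case (fun i => w ((t + i) % (2 * q))) q hq hucl hup hper c0 hmin0
        ⟨a, b, hab, hbN, he, fun hc => hne hc.1 hc.2⟩⟩
end

section
/- Let Γ be a primitive even closed walk of a graph G. Then the edges of the subgraph |Γ| spanned by Γ can be 2-colored (say red and black) so that every edge occurring in an odd position of Γ is black, every edge occurring in an even position is red, and in particular no edge of |Γ| occurs both in an odd and an even position of Γ. -/
/-- If `Γ` is a primitive even closed walk, then the edges of the subgraph `|Γ|` can be
2-coloured (black = `true`, red = `false`) so that every odd-position edge of `Γ` is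
black and every even-position edge is red; in particular no edge of `|Γ|` occurs both
in an odd and in an even position of `Γ`. -/
theorem primitive_walk_two_coloring {V : Type*} (G : SimpleGraph V)
    (w : ℕ → V) (q : ℕ) (hq : 2 ≤ q)
    (hw : IsClosedWalk G w (2 * q)) (hprim : IsPrimitive G w q) :
    (∃ col : Sym2 V → Bool,
      (∀ i < q, col s(w (2 * i), w (2 * i + 1)) = true) ∧
      (∀ i < q, col s(w (2 * i + 1), w (2 * i + 2)) = false)) ∧
    ∀ i < q, ∀ j < q, s(w (2 * i), w (2 * i + 1)) ≠ s(w (2 * j + 1), w (2 * j + 2)) := by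
  classical
  have key : ∀ i < q, ∀ j < q,
      s(w (2 * i), w (2 * i + 1)) ≠ s(w (2 * j + 1), w (2 * j + 2)) := by
    intro i hi j hj heq
    apply hprim
    refine ⟨1, fun t => if t % 2 = 1 then w (2 * i + 1) else w (2 * i),
      le_refl 1, by omega, ⟨by norm_num, ?_⟩, ?_, ?_⟩
    · intro t ht
      have hadj : G.Adj (w (2 * i)) (w (2 * i + 1)) := hw.2 (2 * i) (by omega)
      interval_cases t
      · simpa using hadj
      · simpa using hadj.symm
    · have h0 : oddEdges (fun t => if t % 2 = 1 then w (2 * i + 1) else w (2 * i)) 1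
          = {s(w (2 * i), w (2 * i + 1))} := by
        show Multiset.map _ (Multiset.range 1) = _
        rw [Multiset.range_succ, Multiset.range_zero]
        rfl
      rw [h0, Multiset.singleton_le]
      exact Multiset.mem_map.2 ⟨i, Multiset.mem_range.2 hi, rfl⟩
    · have h0 : evenEdges (fun t => if t % 2 = 1 then w (2 * i + 1) else w (2 * i)) 1
          = {s(w (2 * i + 1), w (2 * i))} := by
        show Multiset.map _ (Multiset.range 1) = _
        rw [Multiset.range_succ, Multiset.range_zero]
        rfl
      rw [h0, Multiset.singleton_le, Sym2.eq_swap, heq]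
      exact Multiset.mem_map.2 ⟨j, Multiset.mem_range.2 hj, rfl⟩
  refine ⟨⟨fun e => if ∃ i < q, e = s(w (2 * i), w (2 * i + 1)) then true else false,
    ?_, ?_⟩, key⟩
  · intro i hi
    exact if_pos ⟨i, hi, rfl⟩
  · intro j hj
    refine if_neg ?_
    rintro ⟨i, hi, hie⟩
    exact key i hi j hj hie.symm
end

section
/- Let I ⊆ K[x_1,...,x_n] be a graded ideal generated in degree d. If I has linear quotients, then I has a linear resolution. -/
open MvPolynomial

/-- The map of free modules `S^a → S^b` given by a matrix `A`. -/
noncomputable def matMap {S : Type*} [CommRing S] {a b : ℕ} (A : Fin a → Fin b → S) :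
    (Fin a → S) →ₗ[S] (Fin b → S) where
  toFun g := fun k => ∑ j, g j * A j k
  map_add' x y := by funext k; simp [add_mul, Finset.sum_add_distrib]
  map_smul' c x := by funext k; simp [Finset.mul_sum, mul_assoc]

/-- `I` has a `d`-linear (free) resolution: there is an exact complex
`⋯ → S(-d-2)^{b 2} → S(-d-1)^{b 1} → S(-d)^{b 0} → I → 0` in which the generators of
`S(-d)^{b 0}` map to homogeneous elements of degree `d` generating `I` and all the
matrices of the resolution have entries homogeneous of degree 1. -/
def HasLinearResolution {K : Type*} [Field K] {n : ℕ}
    (I : Ideal (MvPolynomial (Fin n) K)) (d : ℕ) : Prop :=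
  ∃ (b : ℕ → ℕ) (f : Fin (b 0) → MvPolynomial (Fin n) K)
    (A : (i : ℕ) → Fin (b (i + 1)) → Fin (b i) → MvPolynomial (Fin n) K),
    (∀ j, (f j).IsHomogeneous d) ∧
    (∀ i j k, (A i j k).IsHomogeneous 1) ∧
    Ideal.span (Set.range f) = I ∧
    LinearMap.ker (combMap f) = LinearMap.range (matMap (A 0)) ∧
    ∀ i, LinearMap.ker (matMap (A i)) = LinearMap.range (matMap (A (i + 1)))

/-- `I` has linear quotients: its minimal homogeneous generators (all of degree `d`)
can be ordered so that each successive colon ideal is generated in degree 1. -/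
def HasLinearQuotients {K : Type*} [CommRing K] {n : ℕ}
    (I : Ideal (MvPolynomial (Fin n) K)) (d : ℕ) : Prop :=
  ∃ (s : ℕ) (f : Fin s → MvPolynomial (Fin n) K),
    (∀ i, (f i).IsHomogeneous d) ∧
    Ideal.span (Set.range f) = I ∧
    (∀ i, f i ∉ Ideal.span (f '' {j | j ≠ i})) ∧
    ∀ i : Fin s, 0 < (i : ℕ) →
      DegOneGen ((Ideal.span (f '' {j | (j : ℕ) < (i : ℕ)})).colon (Ideal.span {f i}))

/-!
Induction on the number of generators by iterated mapping cones. Suppose the syzygies of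
`f₀, …, f_{i-1}` have a linear resolution `F`, and the colon ideal `(f₀, …, f_{i-1}) : fᵢ` is
generated by linearly independent linear forms `u`, whose syzygies have a linear resolution `G`.
Multiplication by `fᵢ` lifts to a comparison map `G → F`, which can be chosen linear in every
positive homological degree because all `f_j` have the same degree `d`; its mapping cone is then a
linear resolution of the syzygies of `f₀, …, fᵢ`. Exactness of the cone at the bottom is precisely
the colon condition. The resolution `G` comes from the same construction applied to `u`, using
`(u₀, …, u_{k-1}) : u_k = (u₀, …, u_{k-1})` for linearly independent linear forms.
-/

section FreeModuleMaps

variable {R : Type*} [CommRing R] {a b c s a₀ a₁ a₂ b₀ b₁ b₂ : ℕ}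

@[simp]
lemma combMap_apply (f : Fin s → R) (x : Fin s → R) : combMap f x = ∑ j, x j * f j := rfl

@[simp]
lemma matMap_apply (A : Fin a → Fin b → R) (x : Fin a → R) (k : Fin b) :
    matMap A x k = ∑ j, x j * A j k := rfl

lemma matMap_matMap (A : Fin a → Fin b → R) (B : Fin b → Fin c → R) (x : Fin a → R) :
    matMap B (matMap A x) = matMap (fun j => matMap B (A j)) x := by
  funext k
  simp only [matMap_apply, Finset.sum_mul, Finset.mul_sum, mul_assoc]
  exact Finset.sum_comm

lemma matMap_neg (A : Fin a → Fin b → R) (x : Fin a → R) : matMap (-A) x = -matMap A x := by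
  funext k
  simp

lemma matMap_single (A : Fin a → Fin b → R) (j : Fin a) : matMap A (Pi.single j 1) = A j := by
  funext k
  simp [Pi.single_apply]

lemma matMap_matMap_eq_zero {A : Fin b → Fin c → R} {B : Fin a → Fin b → R}
    (h : LinearMap.ker (matMap A) = LinearMap.range (matMap B)) (x : Fin a → R) :
    matMap A (matMap B x) = 0 := by
  rw [← LinearMap.mem_ker, h]
  exact LinearMap.mem_range_self _ x

def colMat (f : Fin s → R) : Fin s → Fin 1 → R := fun j _ => f j

lemma ker_matMap_colMat (f : Fin s → R) :
    LinearMap.ker (matMap (colMat f)) = LinearMap.ker (combMap f) := by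
  ext x
  simp [funext_iff, colMat]

lemma mem_range_matMap_colMat {f : Fin s → R} {v : Fin 1 → R} :
    v ∈ LinearMap.range (matMap (colMat f)) ↔ v 0 ∈ Ideal.span (Set.range f) := by
  simp [Ideal.mem_span_range_iff_exists_fun, funext_iff, Fin.forall_fin_one, colMat]

lemma Fin.append_inj_iff {α : Type*} {x x' : Fin a → α} {y y' : Fin b → α} :
    Fin.append x y = Fin.append x' y' ↔ x = x' ∧ y = y' :=
  ((Fin.appendEquiv a b).injective.eq_iff (a := (x, y)) (b := (x', y'))).trans Prod.ext_iff

lemma Fin.append_eq_zero_iff {x : Fin a → R} {y : Fin b → R} :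
    Fin.append x y = 0 ↔ x = 0 ∧ y = 0 := by
  rw [← Fin.append_castAdd_natAdd (f := (0 : Fin (a + b) → R))]
  exact Fin.append_inj_iff

/-- `matMap` multiplies row vectors from the right, so this is the block matrix `[[P, 0], [ψ, Q]]`
of the mapping-cone differential `(x, y) ↦ (x P + y ψ, y Q)`. -/
def coneMat (P : Fin a₁ → Fin a₀ → R) (ψ : Fin b₁ → Fin a₀ → R) (Q : Fin b₁ → Fin b₀ → R) :
    Fin (a₁ + b₁) → Fin (a₀ + b₀) → R :=
  Fin.addCases (fun j => Fin.append (P j) 0) (fun t => Fin.append (ψ t) (Q t))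

lemma matMap_coneMat_append (P : Fin a₁ → Fin a₀ → R) (ψ : Fin b₁ → Fin a₀ → R)
    (Q : Fin b₁ → Fin b₀ → R) (x : Fin a₁ → R) (y : Fin b₁ → R) :
    matMap (coneMat P ψ Q) (Fin.append x y) =
      Fin.append (matMap P x + matMap ψ y) (matMap Q y) := by
  funext k
  refine Fin.addCases (fun k => ?_) (fun k => ?_) k <;>
    simp [coneMat, Fin.sum_univ_add]

lemma colMat_snoc {m : ℕ} (f : Fin m → R) (g : R) :
    colMat (Fin.snoc f g : Fin (m + 1) → R) =
      coneMat (colMat f) (fun _ _ => g) (fun _ => Fin.elim0) := by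
  funext j k
  obtain rfl : k = Fin.castAdd 0 0 := Subsingleton.elim _ _
  rw [Fin.snoc_eq_append]
  refine Fin.addCases (fun j => ?_) (fun j => ?_) j <;>
    simp only [coneMat, colMat, Fin.addCases_left, Fin.addCases_right, Fin.append_left,
      Fin.append_right]
  rw [Fin.fin_one_eq_zero j, Fin.cons_zero]

/-- Exactness of the mapping cone at `F₁ ⊕ G₀`. Here `hG` is exactness of `G` at `G₀` modulo the
image of `F₁`; at the bottom of the cone it is the colon condition. -/
theorem ker_matMap_coneMat {P₁ : Fin a₁ → Fin a₀ → R} {P₂ : Fin a₂ → Fin a₁ → R}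
    {ψ₁ : Fin b₁ → Fin a₀ → R} {ψ₂ : Fin b₂ → Fin a₁ → R}
    {Q₀ : Fin b₁ → Fin b₀ → R} {Q₁ : Fin b₂ → Fin b₁ → R}
    (hF : LinearMap.ker (matMap P₁) = LinearMap.range (matMap P₂))
    (hG : ∀ x y, matMap P₁ x + matMap ψ₁ y = 0 → matMap Q₀ y = 0 →
      y ∈ LinearMap.range (matMap Q₁))
    (hQ : ∀ y, matMap Q₀ (matMap Q₁ y) = 0)
    (hψ : ∀ t, matMap P₁ (ψ₂ t) = -matMap ψ₁ (Q₁ t)) :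
    LinearMap.ker (matMap (coneMat P₁ ψ₁ Q₀)) = LinearMap.range (matMap (coneMat P₂ ψ₂ Q₁)) := by
  have hPψ (y : Fin b₂ → R) : matMap P₁ (matMap ψ₂ y) = -matMap ψ₁ (matMap Q₁ y) := by
    rw [matMap_matMap, matMap_matMap, ← matMap_neg]
    exact congrArg (matMap · y) (funext hψ)
  ext z
  constructor
  · rw [← Fin.append_castAdd_natAdd (f := z), LinearMap.mem_ker, matMap_coneMat_append,
      Fin.append_eq_zero_iff]
    set x := fun i => z (Fin.castAdd b₁ i)
    rintro ⟨hx, hy⟩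
    obtain ⟨y', hy'⟩ := hG x _ hx hy
    obtain ⟨x', hx'⟩ : x - matMap ψ₂ y' ∈ LinearMap.range (matMap P₂) := by
      rw [← hF, LinearMap.mem_ker, map_sub, hPψ, hy', sub_neg_eq_add, hx]
    refine ⟨Fin.append x' y', ?_⟩
    rw [matMap_coneMat_append, hx', sub_add_cancel, hy']
  · rintro ⟨w, rfl⟩
    rw [← Fin.append_castAdd_natAdd (f := w), matMap_coneMat_append, LinearMap.mem_ker,
      matMap_coneMat_append, Fin.append_eq_zero_iff, map_add, hPψ,
      matMap_matMap_eq_zero hF, hQ]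
    simp

end FreeModuleMaps

theorem exists_seq_of_forall_exists_succ {T : ℕ → Type*} {P : ∀ k, T k → Prop}
    {Rel : ∀ k, T k → T (k + 1) → Prop} {x₀ : T 0} (h₀ : P 0 x₀)
    (h : ∀ k x, P k x → ∃ y, P (k + 1) y ∧ Rel k x y) :
    ∃ x : ∀ k, T k, x 0 = x₀ ∧ ∀ k, Rel k (x k) (x (k + 1)) := by
  choose y hy hRel using h
  let x : ∀ k, {a : T k // P k a} :=
    fun k => Nat.rec ⟨x₀, h₀⟩ (fun k a => ⟨y k a.1 a.2, hy k a.1 a.2⟩) k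
  exact ⟨fun k => (x k).1, rfl, fun k => hRel k _ _⟩

/-- Ranks `1, s, c 0, c 1, …` of a free complex `⋯ → R^{c 0} → R^s → R`, indexed from the
target `R`. -/
abbrev augRank (s : ℕ) (c : ℕ → ℕ) : ℕ → ℕ
  | 0 => 1
  | 1 => s
  | k + 2 => c k

section GradedResolutions

variable {σ R : Type*} [CommRing R]

local notation "S" => MvPolynomial σ R

attribute [local instance] MvPolynomial.gradedAlgebra in
lemma homogeneousComponent_add_mul {q : S} {j : ℕ} (hq : q.IsHomogeneous j) (i : ℕ) (p : S) :
    homogeneousComponent (i + j) (p * q) = homogeneousComponent i p * q := by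
  simp only [← decomposition.decompose'_apply]
  exact DirectSum.coe_decompose_mul_add_of_right_mem (homogeneousSubmodule σ R) hq

lemma isHomogeneous_matMap {a b i j : ℕ} {A : Fin a → Fin b → S} {x : Fin a → S}
    (hx : ∀ t, (x t).IsHomogeneous i) (hA : ∀ t k, (A t k).IsHomogeneous j) (k : Fin b) :
    (matMap A x k).IsHomogeneous (i + j) :=
  IsHomogeneous.sum _ _ _ fun t _ => (hx t).mul (hA t k)

theorem exists_isHomogeneous_matMap_eq {a b e j : ℕ} {A : Fin a → Fin b → S}
    (hA : ∀ t k, (A t k).IsHomogeneous j) {v : Fin b → S}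
    (hv : ∀ k, (v k).IsHomogeneous (e + j)) (hmem : v ∈ LinearMap.range (matMap A)) :
    ∃ w, (∀ t, (w t).IsHomogeneous e) ∧ matMap A w = v := by
  obtain ⟨w, rfl⟩ := hmem
  refine ⟨fun t => homogeneousComponent e (w t),
    fun t => homogeneousComponent_isHomogeneous e (w t), funext fun k => ?_⟩
  simp only [matMap_apply, ← homogeneousComponent_add_mul (hA _ k), ← map_sum]
  exact homogeneousComponent_eq_self (hv k)

lemma coneMat_isHomogeneous {a₀ a₁ b₀ b₁ i : ℕ} {P : Fin a₁ → Fin a₀ → S}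
    {ψ : Fin b₁ → Fin a₀ → S} {Q : Fin b₁ → Fin b₀ → S} (hP : ∀ j k, (P j k).IsHomogeneous i)
    (hψ : ∀ j k, (ψ j k).IsHomogeneous i) (hQ : ∀ j k, (Q j k).IsHomogeneous i) (j k) :
    (coneMat P ψ Q j k).IsHomogeneous i := by
  refine Fin.addCases (fun j => ?_) (fun j => ?_) j <;>
    refine Fin.addCases (fun k => ?_) (fun k => ?_) k <;>
    simp [coneMat, hP, hψ, hQ, isHomogeneous_zero]

theorem exists_comparisonMap_succ {a₀ a₁ a₂ b₀ b₁ b₂ e : ℕ}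
    {P₁ : Fin a₁ → Fin a₀ → S} {P₂ : Fin a₂ → Fin a₁ → S}
    {Q₁ : Fin b₁ → Fin b₀ → S} {Q₂ : Fin b₂ → Fin b₁ → S} {ψ : Fin b₀ → Fin a₀ → S}
    (hP₁ : ∀ j k, (P₁ j k).IsHomogeneous e) (hψ : ∀ t k, (ψ t k).IsHomogeneous e)
    (hQ₁ : ∀ t k, (Q₁ t k).IsHomogeneous 1)
    (hP : LinearMap.ker (matMap P₁) = LinearMap.range (matMap P₂))
    (hQ : LinearMap.ker (matMap Q₁) = LinearMap.range (matMap Q₂))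
    (hψP : ∀ t, -matMap ψ (Q₁ t) ∈ LinearMap.range (matMap P₁)) :
    ∃ ψ' : Fin b₁ → Fin a₁ → S, (∀ t k, (ψ' t k).IsHomogeneous 1) ∧
      (∀ t, matMap P₁ (ψ' t) = -matMap ψ (Q₁ t)) ∧
      ∀ t, -matMap ψ' (Q₂ t) ∈ LinearMap.range (matMap P₂) := by
  have lift (t : Fin b₁) :
      ∃ w, (∀ j, (w j).IsHomogeneous 1) ∧ matMap P₁ w = -matMap ψ (Q₁ t) :=
    exists_isHomogeneous_matMap_eq hP₁ (fun k => (isHomogeneous_matMap (hQ₁ t) hψ k).neg)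
      (hψP t)
  choose ψ' hψ'_hom hψ' using lift
  refine ⟨ψ', hψ'_hom, hψ', fun t => ?_⟩
  rw [← hP, LinearMap.mem_ker, map_neg, matMap_matMap, funext hψ', ← Pi.neg_def, matMap_neg,
    ← matMap_matMap, ← matMap_single Q₂ t, matMap_matMap_eq_zero hQ]
  simp

theorem exists_comparisonMaps {bF bG : ℕ → ℕ} {AF : ∀ k, Fin (bF (k + 1)) → Fin (bF k) → S}
    {AG : ∀ k, Fin (bG (k + 1)) → Fin (bG k) → S}
    (hF : ∀ k, LinearMap.ker (matMap (AF k)) = LinearMap.range (matMap (AF (k + 1))))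
    (hG : ∀ k, LinearMap.ker (matMap (AG k)) = LinearMap.range (matMap (AG (k + 1))))
    (hAF : ∀ k j l, (AF (k + 1) j l).IsHomogeneous 1) (hAG : ∀ k j l, (AG k j l).IsHomogeneous 1)
    {ψ : Fin (bG 0) → Fin (bF 0) → S} {e : ℕ} (hAF₀ : ∀ j l, (AF 0 j l).IsHomogeneous e)
    (hψ : ∀ t l, (ψ t l).IsHomogeneous e)
    (hψF : ∀ t, -matMap ψ (AG 0 t) ∈ LinearMap.range (matMap (AF 0))) :
    ∃ Θ : ∀ k, Fin (bG k) → Fin (bF k) → S, Θ 0 = ψ ∧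
      (∀ k t l, (Θ (k + 1) t l).IsHomogeneous 1) ∧
      ∀ k t, matMap (AF k) (Θ (k + 1) t) = -matMap (Θ k) (AG k t) := by
  obtain ⟨Θ, hΘ₀, hΘ⟩ := exists_seq_of_forall_exists_succ
    (P := fun k (M : Fin (bG k) → Fin (bF k) → S) => ∃ e, (∀ j l, (AF k j l).IsHomogeneous e) ∧
      (∀ t l, (M t l).IsHomogeneous e) ∧ ∀ t, -matMap M (AG k t) ∈ LinearMap.range (matMap (AF k)))
    (Rel := fun k M M' => (∀ t l, (M' t l).IsHomogeneous 1) ∧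
      ∀ t, matMap (AF k) (M' t) = -matMap M (AG k t))
    ⟨e, hAF₀, hψ, hψF⟩ fun k M ⟨e, hAFk, hM, hMF⟩ => by
      obtain ⟨M', hM'_hom, hM', hM'F⟩ :=
        exists_comparisonMap_succ hAFk hM (hAG k) (hF k) (hG k) hMF
      exact ⟨M', ⟨1, hAF k, hM'_hom, hM'F⟩, hM'_hom, hM'⟩
  exact ⟨Θ, hΘ₀, fun k => (hΘ k).1, fun k => (hΘ k).2⟩

/-- `f` is the last map of an exact complex `⋯ → S^{c 1} → S^{c 0} → S^s → S` all of whose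
other maps are linear. -/
def HasLinearSyzygies {s : ℕ} (f : Fin s → S) : Prop :=
  ∃ (c : ℕ → ℕ) (A : ∀ k, Fin (augRank s c (k + 1)) → Fin (augRank s c k) → S),
    A 0 = colMat f ∧ (∀ k j l, (A (k + 1) j l).IsHomogeneous 1) ∧
    ∀ k, LinearMap.ker (matMap (A k)) = LinearMap.range (matMap (A (k + 1)))

lemma hasLinearSyzygies_fin_zero (f : Fin 0 → S) : HasLinearSyzygies f := by
  refine ⟨fun _ => 0, fun _ _ _ => 0, funext fun j => j.elim0,
    fun _ _ _ => isHomogeneous_zero _ _ _, ?_⟩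
  rintro (_ | k) <;> exact Subsingleton.elim _ _

/-- The differentials `F_{k+1} ⊕ G_k → F_k ⊕ G_{k-1}` of the mapping cone of `Θ : G → F`, with the
bottom one `F_1 ⊕ G_0 → F_0` written as `colMat f` (see `colMat_snoc`). -/
noncomputable def coneSeq {m r : ℕ} {cF cG : ℕ → ℕ} (f : Fin (m + 1) → S)
    (AF : ∀ k, Fin (augRank m cF (k + 1)) → Fin (augRank m cF k) → S)
    (AG : ∀ k, Fin (augRank r cG (k + 1)) → Fin (augRank r cG k) → S)
    (Θ : ∀ k, Fin (augRank r cG k) → Fin (augRank m cF k) → S) :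
    ∀ k, Fin (augRank (m + 1) (fun k => cF k + augRank r cG (k + 1)) (k + 1)) →
      Fin (augRank (m + 1) (fun k => cF k + augRank r cG (k + 1)) k) → S
  | 0 => colMat f
  | 1 => coneMat (AF 1) (Θ 1) (AG 0)
  | k + 2 => coneMat (AF (k + 2)) (Θ (k + 2)) (AG (k + 1))

theorem HasLinearSyzygies.snoc {m r d : ℕ} {f : Fin m → S} {g : S} {u : Fin r → S}
    (hF : HasLinearSyzygies f) (hG : HasLinearSyzygies u) (hf : ∀ j, (f j).IsHomogeneous d)
    (hg : g.IsHomogeneous d) (hu : ∀ t, (u t).IsHomogeneous 1)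
    (hcolon : (Ideal.span (Set.range f)).colon (Ideal.span {g}) = Ideal.span (Set.range u)) :
    HasLinearSyzygies (Fin.snoc f g : Fin (m + 1) → S) := by
  obtain ⟨cF, AF, hAF₀, hAF, hFex⟩ := hF
  obtain ⟨cG, AG, hAG₀, hAG, hGex⟩ := hG
  have mul_mem_iff (a : S) :
      a * g ∈ Ideal.span (Set.range f) ↔ a ∈ Ideal.span (Set.range u) := by
    rw [← hcolon, Ideal.mem_colon_span_singleton]
  have hAG' : ∀ k j l, (AG k j l).IsHomogeneous 1
    | 0, j, _ => hAG₀ ▸ hu j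
    | k + 1, j, l => hAG k j l
  obtain ⟨Θ, hΘ₀, hΘ_hom, hΘ⟩ := exists_comparisonMaps hFex hGex hAF hAG'
    (ψ := fun _ _ => g) (hAF₀ ▸ fun j _ => hf j) (fun _ _ => hg) fun t => by
      rw [hAF₀, hAG₀, mem_range_matMap_colMat]
      simpa [colMat] using (mul_mem_iff (u t)).2 (Ideal.subset_span ⟨t, rfl⟩)
  have cone_exact (k : ℕ) :
      LinearMap.ker (matMap (coneMat (AF (k + 1)) (Θ (k + 1)) (AG k))) =
        LinearMap.range (matMap (coneMat (AF (k + 2)) (Θ (k + 2)) (AG (k + 1)))) :=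
    ker_matMap_coneMat (hFex (k + 1)) (fun _ _ _ hy => hGex k ▸ hy)
      (matMap_matMap_eq_zero (hGex k)) (hΘ (k + 1))
  refine ⟨_, coneSeq (Fin.snoc f g) AF AG Θ, rfl, ?_, ?_⟩
  · rintro (_ | k) <;> exact coneMat_isHomogeneous (hAF _) (hΘ_hom _) (hAG' _)
  · rintro (_ | _ | k)
    · show LinearMap.ker (matMap (colMat (Fin.snoc f g : Fin (m + 1) → S))) = _
      rw [colMat_snoc, ← hAF₀, ← hΘ₀]
      refine ker_matMap_coneMat (hFex 0) (fun x y hxy _ => ?_) (fun _ => Subsingleton.elim _ _)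
        (hΘ 0)
      have h0 : matMap (colMat f) x 0 + y 0 * g = 0 := by
        simpa [hAF₀, hΘ₀] using congrFun hxy 0
      rw [hAG₀, mem_range_matMap_colMat, ← mul_mem_iff, eq_neg_of_add_eq_zero_right h0]
      exact neg_mem (mem_range_matMap_colMat.1 ⟨x, rfl⟩)
    · exact cone_exact 0
    · exact cone_exact (k + 1)

end GradedResolutions

section LinearForms

variable {σ K : Type*} [Field K]

local notation "S" => MvPolynomial σ K

theorem colon_span_eq_of_isHomogeneous_one {U : Set S} (hU : ∀ u ∈ U, u.IsHomogeneous 1)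
    {ℓ : S} (hℓ : ℓ.IsHomogeneous 1) (hℓU : ℓ ∉ Submodule.span K U) :
    (Ideal.span U).colon (Ideal.span {ℓ}) = Ideal.span U := by
  refine le_antisymm (fun p hp => ?_) fun p hp =>
    Ideal.mem_colon_span_singleton.2 (Ideal.mul_mem_right _ _ hp)
  rw [Ideal.mem_colon_span_singleton] at hp
  set V := Submodule.span K U
  have hV : ∀ q ∈ V, q ∈ Ideal.span U := Submodule.span_le_restrictScalars K S U
  obtain ⟨W, hVW⟩ := V.exists_isCompl
  set ρ := V.projection W hVW
  -- `φ` is the identity modulo `Ideal.span U`, kills `U`, but not `ℓ`.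
  set φ : S →ₐ[K] S := aeval fun i => X i - ρ (X i)
  have hφ_linear (q : S) (hq : q.IsHomogeneous 1) : φ q = q - ρ q := by
    rw [← mem_homogeneousSubmodule, homogeneousSubmodule_one_eq_span_X] at hq
    refine LinearMap.eqOn_span (f := φ.toLinearMap) (g := LinearMap.id - ρ) ?_ hq
    rintro _ ⟨i, rfl⟩
    simp [φ]
  have hφU : Ideal.span U ≤ RingHom.ker φ := Ideal.span_le.2 fun u hu => by
    simp [hφ_linear u (hU u hu), ρ, V.projection_apply_of_mem_left hVW (Submodule.subset_span hu)]
  have hφℓ : φ ℓ ≠ 0 := by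
    rw [hφ_linear ℓ hℓ, sub_ne_zero]
    exact fun h => hℓU (h ▸ V.projection_apply_mem hVW ℓ)
  have hφ_mod (q : S) : q - φ q ∈ Ideal.span U := by
    rw [← Ideal.Quotient.eq, ← Ideal.Quotient.mkₐ_eq_mk K, ← AlgHom.comp_apply]
    congr 1
    refine (MvPolynomial.algHom_ext fun i => ?_).symm
    rw [AlgHom.comp_apply, Ideal.Quotient.mkₐ_eq_mk, Ideal.Quotient.eq]
    simpa [φ] using hV _ (V.projection_apply_mem hVW (X i))
  have hφp : φ p = 0 :=
    (mul_eq_zero.1 (by rw [← map_mul]; exact hφU hp)).resolve_right hφℓ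
  simpa [hφp] using hφ_mod p

theorem hasLinearSyzygies_of_linearIndependent {r : ℕ} {u : Fin r → S}
    (hu : ∀ t, (u t).IsHomogeneous 1) (hind : LinearIndependent K u) : HasLinearSyzygies u := by
  induction r with
  | zero => exact hasLinearSyzygies_fin_zero u
  | succ r ih =>
    rw [← Fin.snoc_init_self u] at hind ⊢
    obtain ⟨hind_init, hlast⟩ := linearIndependent_finSnoc.1 hind
    have hinit := ih (fun t => hu _) hind_init
    exact hinit.snoc hinit (fun t => hu _) (hu _) (fun t => hu _)
      (colon_span_eq_of_isHomogeneous_one (by rintro _ ⟨t, rfl⟩; exact hu _) (hu _) hlast)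

theorem DegOneGen.exists_linearIndependent {n : ℕ} {J : Ideal (MvPolynomial (Fin n) K)}
    (h : DegOneGen J) : ∃ (r : ℕ) (u : Fin r → MvPolynomial (Fin n) K),
      (∀ t, (u t).IsHomogeneous 1) ∧ LinearIndependent K u ∧ Ideal.span (Set.range u) = J := by
  obtain ⟨T, hT, rfl⟩ := h
  set V := Submodule.span K T
  have hV : V ≤ homogeneousSubmodule (Fin n) K 1 := Submodule.span_le.2 hT
  have : Module.Finite K (homogeneousSubmodule (Fin n) K 1) :=
    Module.Finite.iff_fg.2 (homogeneousSubmodule_fg _ _ 1)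
  have : FiniteDimensional K V := Submodule.finiteDimensional_of_le hV
  let b := Module.finBasis K V
  refine ⟨_, V.subtype ∘ b, fun t => hV (b t).2, b.linearIndependent.map' _ V.ker_subtype, ?_⟩
  have hspan : Submodule.span K (Set.range (V.subtype ∘ b)) = V := by
    rw [Set.range_comp, ← Submodule.map_span, b.span_eq, Submodule.map_subtype_top]
  unfold Ideal.span
  rw [← Submodule.span_span_of_tower K, hspan, Submodule.span_span_of_tower]

end LinearForms

lemma Fin.init_image_setOf_val_lt {α : Type*} {s k : ℕ} (f : Fin (s + 1) → α) (hk : k ≤ s) :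
    Fin.init f '' {j | (j : ℕ) < k} = f '' {j | (j : ℕ) < k} := by
  ext x
  constructor
  · rintro ⟨j, hj, rfl⟩
    exact ⟨j.castSucc, hj, rfl⟩
  · rintro ⟨j, hj, rfl⟩
    exact ⟨⟨j, by grind⟩, hj, rfl⟩

theorem hasLinearSyzygies_of_degOneGen_colon {K : Type*} [Field K] {n s d : ℕ}
    {f : Fin s → MvPolynomial (Fin n) K} (hf : ∀ i, (f i).IsHomogeneous d)
    (hcolon : ∀ i : Fin s,
      DegOneGen ((Ideal.span (f '' {j | (j : ℕ) < (i : ℕ)})).colon (Ideal.span {f i}))) :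
    HasLinearSyzygies f := by
  induction s with
  | zero => exact hasLinearSyzygies_fin_zero f
  | succ s ih =>
    obtain ⟨r, u, hu, hind, hspan⟩ := (hcolon (Fin.last s)).exists_linearIndependent
    have hinit : HasLinearSyzygies (Fin.init f) := ih (fun i => hf _) fun i => by
      rw [Fin.init_image_setOf_val_lt f i.is_lt.le]
      exact hcolon i.castSucc
    rw [← Fin.snoc_init_self f]
    refine hinit.snoc (hasLinearSyzygies_of_linearIndependent hu hind) (fun i => hf _) (hf _) hu ?_
    rw [hspan, Fin.val_last, ← Fin.init_image_setOf_val_lt f le_rfl]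
    simp only [Fin.is_lt, Set.ofPred_true, Set.image_univ]

/-- A graded ideal generated in degree `d` with linear quotients has a linear
resolution. -/
theorem linear_quotients_implies_linear_resolution {K : Type*} [Field K] {n : ℕ}
    (I : Ideal (MvPolynomial (Fin n) K)) (d : ℕ)
    (h : HasLinearQuotients I d) : HasLinearResolution I d := by
  obtain ⟨s, f, hf, hspan, hmin, hcolon⟩ := h
  have hcolon' (i : Fin s) :
      DegOneGen ((Ideal.span (f '' {j | (j : ℕ) < (i : ℕ)})).colon (Ideal.span {f i})) := by
    rcases Nat.eq_zero_or_pos i with hi | hi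
    · have hfi : f i ≠ 0 := fun h0 => hmin i (h0 ▸ zero_mem _)
      refine ⟨∅, by simp, ?_⟩
      ext p
      simp [hi, hfi]
    · exact hcolon i hi
  obtain ⟨c, A, hA₀, hA, hexact⟩ := hasLinearSyzygies_of_degOneGen_colon hf hcolon'
  refine ⟨fun k => augRank s c (k + 1), f, fun k => A (k + 1), hf, hA, hspan, ?_,
    fun k => hexact (k + 1)⟩
  rw [← ker_matMap_colMat, ← hA₀]
  exact hexact 0
end

section
/- Let G be a finite simple graph and let C_1, C_2 be two vertex-disjoint odd cycles of G joined by a path p of odd length running from a vertex of C_1 to a vertex of C_2 and internally disjoint from both cycles. Then the closed walk Γ = {C_1, p, C_2, -p} (traverse C_1, then p, then C_2, then p reversed) is an even closed walk, and the associated binomial b_Γ has both of its monomials divisible by the square of the variables corresponding to the edges of p appearing in that monomial; in particular, if p has length one with edge e, the variable y_e appears with exponent 2 in exactly one of the two monomials of b_Γ. -/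
/-- The closed walk `Γ = {C₁, p, C₂, -p}` obtained from a bow-tie: traverse the odd
cycle `C₁` (length `a`), the path `p` (length `P`), the odd cycle `C₂` (length `b`) and
then `p` reversed. -/
def bowtieWalk {V : Type*} (a P b : ℕ) (c1 pa c2 : ℕ → V) : ℕ → V := fun i =>
  if i < a then c1 i
  else if i < a + P then pa (i - a)
  else if i < a + P + b then c2 (i - a - P)
  else pa (a + P + b + P - i)

lemma countAux {α : Type*} [DecidableEq α] (q : ℕ) (f : ℕ → α) (x : α) :
    Multiset.count x ((Multiset.range q).map f) = ((Finset.range q).filter (fun k => x = f k)).card := by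
  rw [Multiset.count_map]; rfl

lemma filterPair (q k1 k2 : ℕ) (h1 : k1 < q) (h2 : k2 < q) (hne : k1 ≠ k2)
    (p : ℕ → Prop) [DecidablePred p] (hp : ∀ k < q, p k ↔ k = k1 ∨ k = k2) :
    ((Finset.range q).filter p).card = 2 := by
  have : (Finset.range q).filter p = {k1, k2} := by
    ext k
    simp only [Finset.mem_filter, Finset.mem_range, Finset.mem_insert, Finset.mem_singleton]
    constructor
    · rintro ⟨hk, hpk⟩; exact (hp k hk).1 hpk
    · rintro (rfl | rfl)
      · exact ⟨h1, (hp _ h1).2 (Or.inl rfl)⟩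
      · exact ⟨h2, (hp _ h2).2 (Or.inr rfl)⟩
  rw [this, Finset.card_insert_of_notMem (by simp [hne]), Finset.card_singleton]

lemma filterEmpty (q : ℕ) (p : ℕ → Prop) [DecidablePred p] (hp : ∀ k < q, ¬ p k) :
    ((Finset.range q).filter p).card = 0 := by
  rw [Finset.card_eq_zero, Finset.filter_eq_empty_iff]
  intro x hx; exact hp x (Finset.mem_range.1 hx)


/-- Let `C₁, C₂` be vertex-disjoint odd cycles of `G` joined by a path `p` of odd
length, internally disjoint from both cycles.  Then `Γ = {C₁, p, C₂, -p}` is an even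
closed walk and, in the binomial `b_Γ`, every variable corresponding to an edge of `p`
appears with exponent exactly 2 in one of the two monomials of `b_Γ` and exponent 0 in
the other; in particular when `p` has length one, its edge variable appears with
exponent 2 in exactly one of the two monomials of `b_Γ`. -/
theorem bowtie_walk_path_edges_squared {V : Type*} [Fintype V] [DecidableEq V] (G : SimpleGraph V)
    (a P b : ℕ) (c1 pa c2 : ℕ → V)
    (hodda : Odd a) (hoddb : Odd b) (hoddP : Odd P)
    (ha : 3 ≤ a) (hb : 3 ≤ b) (hP : 1 ≤ P)
    (hc1closed : c1 a = c1 0) (hc2closed : c2 b = c2 0)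
    (hc1adj : ∀ i < a, G.Adj (c1 i) (c1 (i + 1)))
    (hc2adj : ∀ j < b, G.Adj (c2 j) (c2 (j + 1)))
    (hpadj : ∀ t < P, G.Adj (pa t) (pa (t + 1)))
    (hc1inj : Set.InjOn c1 (Set.Iio a)) (hc2inj : Set.InjOn c2 (Set.Iio b))
    (hpinj : Set.InjOn pa (Set.Iic P))
    (hp0 : pa 0 = c1 0) (hpP : pa P = c2 0)
    (hdisj : ∀ i < a, ∀ j < b, c1 i ≠ c2 j)
    (hint : ∀ t, 0 < t → t < P →
      (∀ i < a, pa t ≠ c1 i) ∧ (∀ j < b, pa t ≠ c2 j)) :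
    Even (a + P + b + P) ∧
    IsClosedWalk G (bowtieWalk a P b c1 pa c2) (a + P + b + P) ∧
    (∀ j < P,
      (Multiset.count s(pa j, pa (j + 1))
          (oddEdges (bowtieWalk a P b c1 pa c2) ((a + P + b + P) / 2)) = 2 ∧
        Multiset.count s(pa j, pa (j + 1))
          (evenEdges (bowtieWalk a P b c1 pa c2) ((a + P + b + P) / 2)) = 0) ∨
      (Multiset.count s(pa j, pa (j + 1))
          (oddEdges (bowtieWalk a P b c1 pa c2) ((a + P + b + P) / 2)) = 0 ∧
        Multiset.count s(pa j, pa (j + 1))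
          (evenEdges (bowtieWalk a P b c1 pa c2) ((a + P + b + P) / 2)) = 2)) ∧
    (P = 1 →
      (Multiset.count s(pa 0, pa 1)
          (oddEdges (bowtieWalk a P b c1 pa c2) ((a + P + b + P) / 2)) = 2 ∧
        Multiset.count s(pa 0, pa 1)
          (evenEdges (bowtieWalk a P b c1 pa c2) ((a + P + b + P) / 2)) = 0) ∨
      (Multiset.count s(pa 0, pa 1)
          (oddEdges (bowtieWalk a P b c1 pa c2) ((a + P + b + P) / 2)) = 0 ∧
        Multiset.count s(pa 0, pa 1)
          (evenEdges (bowtieWalk a P b c1 pa c2) ((a + P + b + P) / 2)) = 2)) := by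
  obtain ⟨a', ha'⟩ := hodda
  obtain ⟨b', hb'⟩ := hoddb
  obtain ⟨P', hP'⟩ := hoddP
  set w := bowtieWalk a P b c1 pa c2 with hwdef
  set L := a + P + b + P with hLdef
  set q := L / 2 with hqdef
  have hq2 : L = 2 * q := by omega
  -- vertex formulas
  have hw1 : ∀ i < a, w i = c1 i := by
    intro i h; simp [hwdef, bowtieWalk, h]
  have hw2 : ∀ i, a ≤ i → i ≤ a + P → w i = pa (i - a) := by
    intro i h1 h2
    simp only [hwdef, bowtieWalk]
    split_ifs with g1 g2 g3
    · omega
    · rfl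
    · have e : i = a + P := by omega
      subst e
      rw [show a + P - a - P = 0 from by omega, show a + P - a = P from by omega, hpP]
    · omega
  have hw3 : ∀ i, a + P ≤ i → i ≤ a + P + b → w i = c2 (i - a - P) := by
    intro i h1 h2
    simp only [hwdef, bowtieWalk]
    split_ifs with g1 g2 g3
    · omega
    · omega
    · rfl
    · have : i = a + P + b := by omega
      rw [this]
      have : a + P + b + P - (a + P + b) = P := by omega
      rw [this, hpP]
      have : a + P + b - a - P = b := by omega
      rw [this, hc2closed]
  have hw4 : ∀ i, a + P + b ≤ i → w i = pa (a + P + b + P - i) := by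
    intro i h1
    simp only [hwdef, bowtieWalk]
    split_ifs with g1 g2 g3
    · omega
    · omega
    · omega
    · rfl
  have hpinj' : ∀ s t, s ≤ P → t ≤ P → pa s = pa t → s = t := by
    intro s t hs ht h
    exact hpinj (Set.mem_Iic.2 hs) (Set.mem_Iic.2 ht) h
  have hnotC1 : ∀ t, 1 ≤ t → t ≤ P → ∀ k < a, pa t ≠ c1 k := by
    intro t h1 h2 k hk
    rcases eq_or_lt_of_le h2 with rfl | hlt
    · rw [hpP]; exact (hdisj k hk 0 (by omega)).symm
    · exact (hint t (by omega) hlt).1 k hk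
  have hnotC2 : ∀ t, t < P → ∀ k < b, pa t ≠ c2 k := by
    intro t ht k hk
    rcases Nat.eq_zero_or_pos t with rfl | hpos
    · rw [hp0]; exact hdisj 0 (by omega) k hk
    · exact (hint t hpos ht).2 k hk
  -- key edge characterization
  have key : ∀ j < P, ∀ i < L,
      (s(w i, w (i + 1)) = s(pa j, pa (j + 1)) ↔ (i = a + j ∨ i = L - 1 - j)) := by
    intro j hj i hi
    constructor
    · intro h
      by_cases hA : i < a
      · exfalso
        have h1 : w i = c1 i := hw1 i hA
        have h2 : ∃ k < a, w (i + 1) = c1 k := by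
          by_cases h3 : i + 1 < a
          · exact ⟨i + 1, h3, hw1 _ h3⟩
          · refine ⟨0, by omega, ?_⟩
            have : i + 1 = a := by omega
            rw [hw2 (i+1) (by omega) (by omega), this]
            simp [hp0]
        obtain ⟨k, hk, h2⟩ := h2
        rw [h1, h2, Sym2.eq_iff] at h
        rcases h with ⟨h3, h4⟩ | ⟨h3, h4⟩
        · exact hnotC1 (j+1) (by omega) (by omega) k hk h4.symm
        · exact hnotC1 (j+1) (by omega) (by omega) i hA h3.symm
      · by_cases hB : i < a + P
        · rw [hw2 i (by omega) (by omega), hw2 (i+1) (by omega) (by omega),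
            show i + 1 - a = (i - a) + 1 from by omega, Sym2.eq_iff] at h
          rcases h with ⟨h3, h4⟩ | ⟨h3, h4⟩
          · left
            have := hpinj' _ _ (by omega) (by omega) h3
            omega
          · have e1 := hpinj' _ _ (by omega) (by omega) h3
            have e2 := hpinj' _ _ (by omega) (by omega) h4
            omega
        · by_cases hC : i < a + P + b
          · exfalso
            have h1 : w i = c2 (i - a - P) := hw3 i (by omega) (by omega)
            have h2 : ∃ k < b, w (i + 1) = c2 k := by
              by_cases h3 : i + 1 < a + P + b
              · exact ⟨i + 1 - a - P, by omega, hw3 _ (by omega) (by omega)⟩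
              · refine ⟨0, by omega, ?_⟩
                rw [hw3 (i+1) (by omega) (by omega), show i + 1 - a - P = b from by omega,
                  hc2closed]
            obtain ⟨k, hk, h2⟩ := h2
            rw [h1, h2, Sym2.eq_iff] at h
            rcases h with ⟨h3, h4⟩ | ⟨h3, h4⟩
            · exact hnotC2 j hj _ (by omega) h3.symm
            · exact hnotC2 j hj k hk h4.symm
          · rw [hw4 i (by omega), hw4 (i+1) (by omega)] at h
            set t := L - i - 1 with htdef
            have htP : t < P := by omega
            rw [show a + P + b + P - i = t + 1 from by omega,
              show a + P + b + P - (i + 1) = t from by omega, Sym2.eq_iff] at h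
            rcases h with ⟨h3, h4⟩ | ⟨h3, h4⟩
            · have e1 := hpinj' _ _ (by omega) (by omega) h3
              have e2 := hpinj' _ _ (by omega) (by omega) h4
              omega
            · right
              have := hpinj' _ _ (by omega) (by omega) h4
              omega
    · rintro (rfl | rfl)
      · rw [hw2 (a + j) (by omega) (by omega), hw2 (a + j + 1) (by omega) (by omega),
          show a + j - a = j from by omega, show a + j + 1 - a = j + 1 from by omega]
      · rw [hw4 (L - 1 - j) (by omega), hw4 (L - 1 - j + 1) (by omega),
          show a + P + b + P - (L - 1 - j) = j + 1 from by omega,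
          show a + P + b + P - (L - 1 - j + 1) = j from by omega]
        exact Sym2.eq_swap
  -- counts
  have hcount : ∀ j < P,
      (Multiset.count s(pa j, pa (j + 1)) (oddEdges w q) = 2 ∧
        Multiset.count s(pa j, pa (j + 1)) (evenEdges w q) = 0) ∨
      (Multiset.count s(pa j, pa (j + 1)) (oddEdges w q) = 0 ∧
        Multiset.count s(pa j, pa (j + 1)) (evenEdges w q) = 2) := by
    intro j hj
    have hodd : Multiset.count s(pa j, pa (j + 1)) (oddEdges w q)
        = ((Finset.range q).filter
            (fun k => s(pa j, pa (j + 1)) = s(w (2 * k), w (2 * k + 1)))).card := by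
      rw [oddEdges, countAux]
    have heven : Multiset.count s(pa j, pa (j + 1)) (evenEdges w q)
        = ((Finset.range q).filter
            (fun k => s(pa j, pa (j + 1)) = s(w (2 * k + 1), w (2 * k + 2)))).card := by
      rw [evenEdges, countAux]
    have hkeyO : ∀ k < q, (s(pa j, pa (j + 1)) = s(w (2 * k), w (2 * k + 1))
        ↔ (2 * k = a + j ∨ 2 * k = L - 1 - j)) := by
      intro k hk
      rw [eq_comm, key j hj (2 * k) (by omega)]
    have hkeyE : ∀ k < q, (s(pa j, pa (j + 1)) = s(w (2 * k + 1), w (2 * k + 2))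
        ↔ (2 * k + 1 = a + j ∨ 2 * k + 1 = L - 1 - j)) := by
      intro k hk
      have := key j hj (2 * k + 1) (by omega)
      rw [eq_comm, show 2 * k + 1 + 1 = 2 * k + 2 from rfl] at this
      exact this
    rcases Nat.even_or_odd j with hje | hjo
    · obtain ⟨m, hm⟩ := hje
      -- j even: a + j and L-1-j odd, so in evenEdges (index 2k+1)
      right
      constructor
      · rw [hodd]
        apply filterEmpty
        intro k hk hpk
        rw [hkeyO k hk] at hpk
        omega
      · rw [heven]
        apply filterPair q ((a + j - 1) / 2) ((L - j) / 2 - 1) (by omega) (by omega) (by omega)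
        intro k hk
        rw [hkeyE k hk]
        omega
    · obtain ⟨m, hm⟩ := hjo
      left
      constructor
      · rw [hodd]
        apply filterPair q ((a + j) / 2) ((L - 1 - j) / 2) (by omega) (by omega) (by omega)
        intro k hk
        rw [hkeyO k hk]
        omega
      · rw [heven]
        apply filterEmpty
        intro k hk hpk
        rw [hkeyE k hk] at hpk
        omega
  refine ⟨⟨a' + b' + P' + P' + 2, by omega⟩, ⟨?_, ?_⟩, hcount, fun h1 => hcount 0 (by omega)⟩
  · rw [hw4 L (by omega), show a + P + b + P - L = 0 from by omega, hp0, hw1 0 (by omega)]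
  · intro i hi
    by_cases hA : i + 1 < a
    · rw [hw1 i (by omega), hw1 (i+1) hA]
      exact hc1adj i (by omega)
    · by_cases hA2 : i + 1 = a
      · have h := hc1adj i (by omega)
        rw [hA2, hc1closed, ← hp0] at h
        rw [hw1 i (by omega), hw2 (i+1) (by omega) (by omega),
          show i + 1 - a = 0 from by omega]
        exact h
      · by_cases hB : i < a + P
        · rw [hw2 i (by omega) (by omega), hw2 (i+1) (by omega) (by omega),
            show i + 1 - a = (i - a) + 1 from by omega]
          exact hpadj (i - a) (by omega)
        · by_cases hC : i + 1 < a + P + b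
          · rw [hw3 i (by omega) (by omega), hw3 (i+1) (by omega) (by omega),
              show i + 1 - a - P = (i - a - P) + 1 from by omega]
            exact hc2adj (i - a - P) (by omega)
          · by_cases hC2 : i + 1 = a + P + b
            · have h := hc2adj (i - a - P) (by omega)
              have : i - a - P + 1 = b := by omega
              rw [this, hc2closed, ← hpP] at h
              rw [hw3 i (by omega) (by omega), hw4 (i+1) (by omega),
                show a + P + b + P - (i + 1) = P from by omega]
              exact h
            · rw [hw4 i (by omega), hw4 (i+1) (by omega)]
              have htP : L - i - 1 < P := by omega
              have h := (hpadj (L - i - 1) htP).symm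
              rw [show a + P + b + P - i = (L - i - 1) + 1 from by omega,
                show a + P + b + P - (i + 1) = L - i - 1 from by omega]
              exact h
end

section
/- Let G be a graph on 6 vertices with edges e_1={1,2}, e_2={1,3}, e_3={2,3}, e_4={1,4}, e_5={3,4}, e_6={1,5}, e_7={4,5}, e_8={2,6}, e_9={3,6}, e_10={5,6}. Then G is gap-free, and the binomial y_3 y_4 y_7 y_9 − y_5^2 y_6 y_8 belongs to the toric ideal I_G (under y_i ↦ M_{e_i}); in particular I_G contains an irreducible binomial one of whose monomials is not squarefree. -/
open MvPolynomial

/-- A simple graph is gap-free if any two edges with no common vertex are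
joined by at least one edge. -/
def GapFree {V : Type*} (G : SimpleGraph V) : Prop :=
  ∀ v1 v2 w1 w2 : V, G.Adj v1 v2 → G.Adj w1 w2 →
    v1 ≠ w1 → v1 ≠ w2 → v2 ≠ w1 → v2 ≠ w2 →
    G.Adj v1 w1 ∨ G.Adj v1 w2 ∨ G.Adj v2 w1 ∨ G.Adj v2 w2

/-- The graph on vertices `1, …, 6` (here `0, …, 5`) with the ten edges
`e₁ = {1,2}, e₂ = {1,3}, e₃ = {2,3}, e₄ = {1,4}, e₅ = {3,4}, e₆ = {1,5}, e₇ = {4,5},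
e₈ = {2,6}, e₉ = {3,6}, e₁₀ = {5,6}`. -/
def exampleGraph : SimpleGraph (Fin 6) :=
  SimpleGraph.fromEdgeSet
    {s(0, 1), s(0, 2), s(1, 2), s(0, 3), s(2, 3), s(0, 4), s(3, 4),
      s(1, 5), s(2, 5), s(4, 5)}

/-- The edge monomials `M_{e₁}, …, M_{e₁₀}` of `exampleGraph`. -/
noncomputable def exampleEdgeMon (K : Type*) [Field K] :
    Fin 10 → MvPolynomial (Fin 6) K :=
  ![X 0 * X 1, X 0 * X 2, X 1 * X 2, X 0 * X 3, X 2 * X 3,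
    X 0 * X 4, X 3 * X 4, X 1 * X 5, X 2 * X 5, X 4 * X 5]

/-- The binomial `y₃ y₄ y₇ y₉ − y₅² y₆ y₈` (with 1-based indexing of the ten edge
variables). -/
noncomputable def exampleBinomial (K : Type*) [Field K] : MvPolynomial (Fin 10) K :=
  X 2 * X 3 * X 6 * X 8 - X 4 ^ 2 * X 5 * X 7

/-!
Both monomials of `y₃ y₄ y₇ y₉ − y₅² y₆ y₈` map to `x₁ x₂ x₃² x₄² x₅ x₆`, so the binomial lies
in the toric ideal. It is irreducible because its two monomials involve disjoint sets of
variables and `y₃` occurs only to the first power: as a polynomial in `y₃` it is linear, with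
relatively prime coefficients `y₄ y₇ y₉` and `−y₅² y₆ y₈`. Gap-freeness is a finite check.
-/

namespace MvPolynomial

variable {σ R : Type*} [CommRing R]

theorem support_monomial_sub_monomial [DecidableEq σ] [Nontrivial R] {a b : σ →₀ ℕ}
    (hab : a ≠ b) : (monomial a (1 : R) - monomial b 1).support = {a, b} := by
  ext d
  by_cases ha : d = a <;> by_cases hb : d = b <;>
    simp_all [mem_support_iff, coeff_sub, coeff_monomial, eq_comm]

theorem irreducible_monomial_sub_monomial [IsDomain R] {a b : σ →₀ ℕ}
    (hab : Disjoint a.support b.support) {i : σ} (hi : a i = 1) :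
    Irreducible (monomial a (1 : R) - monomial b 1) := by
  classical
  have hne : a ≠ b := by
    rintro rfl
    simp_all
  have hsupp := support_monomial_sub_monomial (R := R) hne
  refine irreducible_of_disjoint_support ?_ (d := a) (by simp [hsupp]) hi ?_ ?_
  · rw [hsupp, ← Finset.nontrivial_coe, Finset.coe_pair]
    exact Set.nontrivial_pair hne
  · simp only [hsupp, Finset.coe_insert, Finset.coe_singleton, Set.PairwiseDisjoint,
      Set.pairwise_pair]
    exact fun _ => ⟨hab, hab.symm⟩
  · intro r hr
    exact isUnit_of_dvd_one (by simpa [coeff_sub, coeff_monomial, hne.symm] using hr a)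

end MvPolynomial

open Finsupp

theorem exampleGraph_adj_iff (a b : Fin 6) :
    exampleGraph.Adj a b ↔
      s(a, b) ∈ ({s(0, 1), s(0, 2), s(1, 2), s(0, 3), s(2, 3), s(0, 4), s(3, 4),
        s(1, 5), s(2, 5), s(4, 5)} : Finset (Sym2 (Fin 6))) ∧ a ≠ b := by
  simp only [exampleGraph, SimpleGraph.fromEdgeSet_adj, Set.mem_insert_iff,
    Set.mem_singleton_iff, Finset.mem_insert, Finset.mem_singleton]

theorem exampleGraph_gapFree : GapFree exampleGraph := by
  unfold GapFree
  simp only [exampleGraph_adj_iff]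
  decide

theorem exampleBinomial_mem_ker (K : Type*) [Field K] :
    exampleBinomial K ∈ RingHom.ker (aeval (exampleEdgeMon K)).toRingHom := by
  simp only [exampleBinomial, exampleEdgeMon, RingHom.mem_ker, AlgHom.toRingHom_eq_coe,
    RingHom.coe_coe, map_sub, map_mul, map_pow, aeval_X, Matrix.cons_val]
  ring

theorem exampleBinomial_eq (K : Type*) [Field K] :
    exampleBinomial K =
      monomial (single 2 1 + single 3 1 + single 6 1 + single 8 1) 1
        - monomial (single 4 2 + single 5 1 + single 7 1) 1 := by
  simp [exampleBinomial, X, monomial_mul, monomial_pow]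

/-- The graph above is gap-free, and the binomial `y₃ y₄ y₇ y₉ − y₅² y₆ y₈` lies in its
toric ideal (the kernel of `yᵢ ↦ M_{eᵢ}`); moreover this binomial is irreducible and
one of its monomials is not squarefree.  Hence the toric ideal of a gap-free graph may
contain an irreducible binomial one of whose monomials is not squarefree. -/
theorem exampleGraph_nonsquarefree_circuit (K : Type*) [Field K] :
    GapFree exampleGraph ∧
    exampleBinomial K ∈
      RingHom.ker (MvPolynomial.aeval (exampleEdgeMon K)).toRingHom ∧
    Irreducible (exampleBinomial K) ∧
    ∃ d ∈ (exampleBinomial K).support, ∃ i : Fin 10, 2 ≤ d i := by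
  classical
  refine ⟨exampleGraph_gapFree, exampleBinomial_mem_ker K, ?_⟩
  set a : Fin 10 →₀ ℕ := single 2 1 + single 3 1 + single 6 1 + single 8 1
  set b : Fin 10 →₀ ℕ := single 4 2 + single 5 1 + single 7 1
  have hab : Disjoint a.support b.support := by simp [a, b, support_add_eq]
  have hne : a ≠ b := fun h => by simpa [a, b] using DFunLike.congr_fun h 4
  rw [exampleBinomial_eq, support_monomial_sub_monomial hne]
  exact ⟨irreducible_monomial_sub_monomial hab (i := 2) (by simp),
    b, by simp, 4, by simp [b]⟩
end
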